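/- arXiv:math/0305321 — 8 statements merged into one kernel-verified Lean document; each statement's English description precedes it below -/
import Mathlib

section
/- Let F be a field, let N be an odd positive integer, and let B be an invertible N×N matrix over F. Then 1 is an eigenvalue of B^∨B; that is, det(B^∨B − I_N) = 0. -/
/-- If a finset is closed under a fixed-point-free involution, its cardinality is even. -/
lemma even_card_of_fpf_involution {α : Type*} [DecidableEq α] (f : α → α) :
    ∀ s : Finset α, (∀ a ∈ s, f a ∈ s) → (∀ a ∈ s, f (f a) = a) →
      (∀ a ∈ s, f a ≠ a) → Even s.card := by
  intro s
  induction s using Finset.strongInduction with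
  | H s ih =>
    intro hmem hinv hne
    obtain rfl | ⟨a, ha⟩ := s.eq_empty_or_nonempty
    · simp
    · have hfa : f a ∈ s := hmem a ha
      have hane : f a ≠ a := hne a ha
      set t : Finset α := s \ {a, f a} with ht
      have hsub : {a, f a} ⊆ s := by
        intro x hx
        simp only [Finset.mem_insert, Finset.mem_singleton] at hx
        rcases hx with rfl | rfl
        · exact ha
        · exact hfa
      have htss : t ⊂ s := by
        refine Finset.ssubset_iff.2 ⟨a, ?_, ?_⟩
        · simp [ht]
        · intro x hx
          rcases Finset.mem_insert.mp hx with rfl | hx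
          · exact ha
          · exact (Finset.mem_sdiff.mp hx).1
      have htmem : ∀ b ∈ t, f b ∈ t := by
        intro b hb
        rcases Finset.mem_sdiff.mp hb with ⟨hbs, hbn⟩
        simp only [Finset.mem_insert, Finset.mem_singleton, not_or] at hbn
        refine Finset.mem_sdiff.mpr ⟨hmem b hbs, ?_⟩
        simp only [Finset.mem_insert, Finset.mem_singleton, not_or]
        constructor
        · intro h
          apply hbn.2
          rw [← h, hinv b hbs]
        · intro h
          apply hbn.1
          have := congrArg f h
          rwa [hinv b hbs, hinv a ha] at this
      have heven : Even t.card :=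
        ih t htss htmem (fun b hb => hinv b (Finset.mem_sdiff.mp hb).1)
          (fun b hb => hne b (Finset.mem_sdiff.mp hb).1)
      have hcard : s.card = t.card + 2 := by
        rw [ht, Finset.card_sdiff_of_subset hsub]
        have h2 : ({a, f a} : Finset α).card = 2 := by
          rw [Finset.card_insert_of_notMem (by simpa using hane.symm),
            Finset.card_singleton]
        have hle : 2 ≤ s.card := by
          calc 2 = ({a, f a} : Finset α).card := h2.symm
            _ ≤ s.card := Finset.card_le_card hsub
        rw [h2]
        omega
      rw [hcard]
      exact heven.add (by norm_num)

/-- The determinant of an odd-size alternating matrix (skew-symmetric with zero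
diagonal) vanishes over any commutative ring. -/
lemma det_alternating_odd {R : Type*} [CommRing R] {N : ℕ} (hNodd : Odd N)
    (A : Matrix (Fin N) (Fin N) R) (hskew : ∀ i j, A i j = - A j i)
    (hdiag : ∀ i, A i i = 0) : A.det = 0 := by
  classical
  rw [Matrix.det_apply']
  refine Finset.sum_ninvolution (fun σ => σ⁻¹) ?_ ?_ (fun σ => Finset.mem_univ _)
    (fun σ => inv_inv σ)
  · intro σ
    have hsign : Equiv.Perm.sign σ⁻¹ = Equiv.Perm.sign σ := by
      simp
    have hprod : (∏ i, A (σ⁻¹ i) i) = - ∏ i, A (σ i) i := by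
      have h1 : (∏ i, A (σ⁻¹ i) i) = ∏ i, A i (σ i) := by
        rw [← Equiv.prod_comp σ (fun j => A (σ⁻¹ j) j)]
        simp
      rw [h1]
      have h2 : (∏ i, A i (σ i)) = ∏ i, - A (σ i) i := by
        refine Finset.prod_congr rfl fun i _ => ?_
        exact hskew i (σ i)
      rw [h2]
      simp only [neg_eq_neg_one_mul ((A _ _ : R)), Finset.prod_mul_distrib,
        Finset.prod_const, Finset.card_univ, Fintype.card_fin, hNodd.neg_one_pow]
      ring
    rw [hsign, hprod]
    ring
  · intro σ hσ hinv
    apply hσ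
    -- σ is an involution; since N is odd it must have a fixed point
    have hinv' : ∀ i, σ (σ i) = i := by
      intro i
      nth_rewrite 1 [← hinv]
      simp
    by_cases hfix : ∃ i, σ i = i
    · obtain ⟨i, hi⟩ := hfix
      have : (∏ j, A (σ j) j) = 0 :=
        Finset.prod_eq_zero (Finset.mem_univ i) (by rw [hi, hdiag])
      rw [this, mul_zero]
    · push_neg at hfix
      exfalso
      have heven : Even (Finset.univ : Finset (Fin N)).card :=
        even_card_of_fpf_involution σ Finset.univ (fun a _ => Finset.mem_univ _)
          (fun a _ => hinv' a) (fun a _ => hfix a)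
      rw [Finset.card_univ, Fintype.card_fin] at heven
      exact (Nat.not_even_iff_odd.mpr hNodd) heven

/-- **Lemma 4.5 (first part) of "Geometric non-vanishing" (Ulmer).**
Let `F` be a field, `N` an odd positive integer, and `B` an invertible `N × N`
matrix over `F`.  Writing `B^∨ = (Bᵀ)⁻¹` for the inverse transpose of `B`,
the matrix `B^∨ * B` has `1` as an eigenvalue, i.e. `det (B^∨ * B - 1) = 0`. -/
theorem det_invTranspose_mul_self_sub_one_eq_zero
    {F : Type*} [Field F] {N : ℕ} (hNpos : 0 < N) (hNodd : Odd N)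
    (B : Matrix (Fin N) (Fin N) F) (hB : IsUnit B.det) :
    (B.transpose⁻¹ * B - 1).det = 0 := by
  have hBT : IsUnit B.transpose.det := by rwa [Matrix.det_transpose]
  have hfactor : B.transpose⁻¹ * B - 1 = B.transpose⁻¹ * (B - B.transpose) := by
    rw [Matrix.mul_sub, Matrix.nonsing_inv_mul _ hBT]
  rw [hfactor, Matrix.det_mul]
  have hA : (B - B.transpose).det = 0 := by
    refine det_alternating_odd hNodd _ (fun i j => ?_) (fun i => ?_)
    · simp only [Matrix.sub_apply, Matrix.transpose_apply]
      ring
    · simp [Matrix.sub_apply, Matrix.transpose_apply]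
  rw [hA, mul_zero]
end

section
/- Let F be an infinite field, let N be an odd positive integer, let α ∈ F with α ≠ 1, and let δ ∈ F be nonzero. Then there exists an invertible N×N matrix B over F with det B = δ such that 1 is a root of the characteristic polynomial of B^∨B of multiplicity exactly 1 and α is not a root of the characteristic polynomial of B^∨B. -/
/-!
Take `B = diagonal e * P`, where `P` is the permutation matrix of the involution `Fin.rev`.
Because `P` is a symmetric involution, `B = Bᵀ * diagonal d` with `d i = e (rev i) / e i`, so
`B^∨ B = diagonal d`. With weights `1` and `t ∉ {0, 1, α, α⁻¹}` the entries of `d` away from the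
unique fixed point of `rev` (which exists since `N` is odd) are `t` or `t⁻¹`, while the entry at
the fixed point is `1` whatever the weight there; that weight is then chosen to make `det B = δ`.
-/

open Finset Polynomial Matrix

namespace Matrix

variable {ι F : Type*} [Fintype ι] [DecidableEq ι] [Field F]

theorem rootMultiplicity_charpoly_diagonal [DecidableEq F] (d : ι → F) (a : F) :
    rootMultiplicity a (diagonal d).charpoly = #{i | d i = a} := by
  have hprod : (diagonal d).charpoly = ((univ.val.map d).map fun a => X - C a).prod := by
    rw [charpoly_diagonal, Finset.prod_eq_multiset_prod, Multiset.map_map]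
    rfl
  rw [← count_roots, hprod, roots_multiset_prod_X_sub_C, Multiset.count_map, Finset.card_def,
    Finset.filter_val]
  simp only [eq_comm]

theorem isRoot_charpoly_diagonal_iff (d : ι → F) (a : F) :
    (diagonal d).charpoly.IsRoot a ↔ ∃ i, d i = a := by
  simp only [IsRoot, charpoly_diagonal, eval_prod, eval_sub, eval_X, eval_C,
    Finset.prod_eq_zero_iff, sub_eq_zero, mem_univ, true_and]
  exact exists_congr fun _ => eq_comm

theorem diagonal_mul_permMatrix_eq_transpose_mul_diagonal {σ : Equiv.Perm ι}
    (hσ : Function.Involutive σ) {e : ι → F} (he : ∀ i, e i ≠ 0) :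
    diagonal e * σ.permMatrix F =
      (diagonal e * σ.permMatrix F)ᵀ * diagonal fun i => e (σ i) / e i := by
  ext i j
  simp only [diagonal_mul, mul_diagonal, transpose_apply, PEquiv.toMatrix_apply,
    Equiv.toPEquiv_apply, Option.mem_def, Option.some_inj, mul_ite, ite_mul, mul_one, mul_zero,
    zero_mul]
  by_cases h : σ i = j
  · subst h
    rw [if_pos rfl, if_pos (hσ i), hσ i, mul_div_cancel₀ _ (he _)]
  · have hj : σ j ≠ i := fun h' => h (h' ▸ hσ j)
    rw [if_neg h, if_neg hj]

theorem transpose_inv_mul_self_of_eq_transpose_mul {B D : Matrix ι ι F} (hB : IsUnit B.det)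
    (h : B = Bᵀ * D) : Bᵀ⁻¹ * B = D := by
  rw [← nonsing_inv_mul_cancel_left (A := Bᵀ) D (by rwa [det_transpose]), ← h]

end Matrix

namespace Fin

variable {N : ℕ}

def center (hN : Odd N) : Fin N :=
  ⟨N / 2, by obtain ⟨k, rfl⟩ := hN; omega⟩

theorem rev_eq_self_iff_eq_center (hN : Odd N) (i : Fin N) : i.rev = i ↔ i = center hN := by
  rw [Fin.ext_iff, Fin.ext_iff, val_rev]
  obtain ⟨k, rfl⟩ := hN
  simp only [center]
  omega

def revWeight {F : Type*} [One F] (t : F) (i : Fin N) : F :=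
  if i < i.rev then 1 else t

theorem revWeight_ne_zero {F : Type*} [MulZeroOneClass F] [NeZero (1 : F)] {t : F} (ht : t ≠ 0)
    (i : Fin N) : revWeight t i ≠ 0 := by
  unfold revWeight
  split_ifs <;> simp [ht]

theorem revWeight_rev_div_revWeight {F : Type*} [DivisionMonoid F] (t : F) {i : Fin N}
    (hi : i.rev ≠ i) :
    revWeight t i.rev / revWeight t i = t ∨ revWeight t i.rev / revWeight t i = t⁻¹ := by
  unfold revWeight
  rw [rev_rev]
  rcases lt_or_gt_of_ne hi with h | h
  · right
    rw [if_pos h, if_neg (lt_asymm h), one_div]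
  · left
    rw [if_neg (lt_asymm h), if_pos h, div_one]

end Fin

open Fin in
theorem exists_det_eq_and_transpose_inv_mul_self_eq_diagonal {F : Type*} [Field F] {N : ℕ}
    (hN : Odd N) {t : F} (ht : t ≠ 0) {δ : F} (hδ : δ ≠ 0) :
    ∃ B : Matrix (Fin N) (Fin N) F, B.det = δ ∧ ∃ d : Fin N → F, Bᵀ⁻¹ * B = diagonal d ∧
      d (center hN) = 1 ∧ ∀ i ≠ center hN, d i = t ∨ d i = t⁻¹ := by
  set m := center hN
  have hm : m.rev = m := (rev_eq_self_iff_eq_center hN m).2 rfl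
  set s : F := ((Equiv.Perm.sign (revPerm : Equiv.Perm (Fin N)) : ℤ) : F)
  have hs : s ≠ 0 := by
    rcases Int.units_eq_one_or (Equiv.Perm.sign (revPerm : Equiv.Perm (Fin N))) with h | h <;>
      simp [s, h]
  have hsP : s * ∏ i ∈ univ \ {m}, revWeight t i ≠ 0 :=
    mul_ne_zero hs (prod_ne_zero_iff.2 fun i _ => revWeight_ne_zero ht i)
  set c := δ / (s * ∏ i ∈ univ \ {m}, revWeight t i)
  have hc : c ≠ 0 := div_ne_zero hδ hsP
  set e := Function.update (revWeight t) m c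
  have he (i : Fin N) : e i ≠ 0 := by
    rcases eq_or_ne i m with rfl | hi
    · simpa [e] using hc
    · simpa [e, hi] using revWeight_ne_zero ht i
  set B := diagonal e * (revPerm : Equiv.Perm (Fin N)).permMatrix F
  have hdet : B.det = δ := by
    rw [det_mul, det_diagonal, det_permutation, prod_update_of_mem (mem_univ m), mul_assoc,
      mul_comm (∏ i ∈ univ \ {m}, revWeight t i)]
    exact div_mul_cancel₀ δ hsP
  refine ⟨B, hdet, _, transpose_inv_mul_self_of_eq_transpose_mul (hdet ▸ hδ.isUnit)
    (diagonal_mul_permMatrix_eq_transpose_mul_diagonal rev_involutive he), ?_, fun i hi => ?_⟩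
  · simp [e, hm, hc]
  · have hri : i.rev ≠ m := fun h => hi (by rw [← hm, ← h, rev_rev])
    simpa [e, hi, hri] using
      revWeight_rev_div_revWeight t ((rev_eq_self_iff_eq_center hN i).not.2 hi)

theorem exists_det_eq_one_simple_eigenvalue_of_invTranspose_mul_self_general
    {F : Type*} [Field F] [Infinite F] {N : ℕ} (hNodd : Odd N)
    (α : F) (hα : α ≠ 1) (δ : F) (hδ : δ ≠ 0) :
    ∃ B : Matrix (Fin N) (Fin N) F, IsUnit B.det ∧ B.det = δ ∧
      Polynomial.rootMultiplicity 1 (B.transpose⁻¹ * B).charpoly = 1 ∧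
      ¬ (B.transpose⁻¹ * B).charpoly.IsRoot α := by
  classical
  obtain ⟨t, ht⟩ := Infinite.exists_notMem_finset ({0, 1, α, α⁻¹} : Finset F)
  simp only [mem_insert, mem_singleton, not_or] at ht
  obtain ⟨ht0, ht1, htα, htα'⟩ := ht
  obtain ⟨B, hdet, d, hB, hd_center, hd⟩ :=
    exists_det_eq_and_transpose_inv_mul_self_eq_diagonal hNodd ht0 hδ
  have hd_eq_one (i : Fin N) : d i = 1 ↔ i = Fin.center hNodd := by
    refine ⟨fun h => by_contra fun hi => ?_, fun h => h ▸ hd_center⟩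
    rcases hd i hi with h' | h' <;> simp_all
  have hd_ne (i : Fin N) : d i ≠ α := by
    rcases eq_or_ne i (Fin.center hNodd) with rfl | hi
    · rwa [hd_center, ne_comm]
    · rcases hd i hi with h | h <;> rw [h]
      · exact htα
      · exact fun h => htα' (inv_eq_iff_eq_inv.1 h)
  refine ⟨B, hdet ▸ hδ.isUnit, hdet, ?_, ?_⟩
  · rw [hB, rootMultiplicity_charpoly_diagonal, card_eq_one]
    exact ⟨Fin.center hNodd, by ext i; simp [hd_eq_one]⟩
  · rw [hB, isRoot_charpoly_diagonal_iff]
    exact fun ⟨i, hi⟩ => hd_ne i hi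

/-- **Lemma 4.5 (second part, odd case) of "Geometric non-vanishing" (Ulmer).**
Let `F` be an infinite field, `N` an odd positive integer, `α ∈ F` with
`α ≠ 1`, and `δ ∈ F` nonzero.  Then there exists an invertible `N × N` matrix
`B` over `F` with `det B = δ` such that, writing `B^∨ = (Bᵀ)⁻¹` for the
inverse transpose, `1` is a root of the characteristic polynomial of `B^∨ * B`
of multiplicity exactly `1`, and `α` is not a root of that characteristic
polynomial. -/
theorem exists_det_eq_one_simple_eigenvalue_of_invTranspose_mul_self
    {F : Type*} [Field F] [Infinite F] {N : ℕ} (hNpos : 0 < N) (hNodd : Odd N)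
    (α : F) (hα : α ≠ 1) (δ : F) (hδ : δ ≠ 0) :
    ∃ B : Matrix (Fin N) (Fin N) F, IsUnit B.det ∧ B.det = δ ∧
      Polynomial.rootMultiplicity 1 (B.transpose⁻¹ * B).charpoly = 1 ∧
      ¬ (B.transpose⁻¹ * B).charpoly.IsRoot α :=
  exists_det_eq_one_simple_eigenvalue_of_invTranspose_mul_self_general hNodd α hα δ hδ
end

section
/- Let F be an infinite field, let N be an even positive integer, let α ∈ F, and let δ ∈ F be nonzero. Then there exists an invertible N×N matrix B over F with det B = δ such that α is not an eigenvalue of B^∨B, i.e., det(α·I_N − B^∨B) ≠ 0. -/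
/-- Auxiliary: the case `α ≠ 1`, using a diagonal matrix `B` (so that
`B^∨ * B = 1`). -/
private theorem aux_ne_one {F : Type*} [Field F] {N : ℕ} (hNpos : 0 < N)
    (α : F) (δ : F) (hδ : δ ≠ 0) (hα : α ≠ 1) :
    ∃ B : Matrix (Fin N) (Fin N) F, IsUnit B.det ∧ B.det = δ ∧
      (α • (1 : Matrix (Fin N) (Fin N) F) - B.transpose⁻¹ * B).det ≠ 0 := by
  haveI : NeZero N := ⟨hNpos.ne'⟩
  set B : Matrix (Fin N) (Fin N) F := Matrix.diagonal (fun i => if i = 0 then δ else 1) with hB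
  have hdet : B.det = δ := by rw [hB, Matrix.det_diagonal]; simp
  have hunit : IsUnit B.det := by rw [hdet]; exact isUnit_iff_ne_zero.mpr hδ
  refine ⟨B, hunit, hdet, ?_⟩
  have hTsym : B.transpose = B := by rw [hB, Matrix.diagonal_transpose]
  rw [hTsym, Matrix.nonsing_inv_mul B hunit]
  have : α • (1 : Matrix (Fin N) (Fin N) F) - 1 = (α - 1) • 1 := by
    rw [sub_smul, one_smul]
  rw [this, Matrix.det_smul, Matrix.det_one, mul_one]
  exact pow_ne_zero _ (sub_ne_zero.mpr hα)

/-- Auxiliary: the case `α = 1`, using an upper-triangular matrix `B` whose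
antisymmetrization `Bᵀ - B` is invertible (this uses that `N` is even). -/
private theorem aux_eq_one {F : Type*} [Field F] {N : ℕ} (hNpos : 0 < N) (hNeven : Even N)
    (δ : F) (hδ : δ ≠ 0) :
    ∃ B : Matrix (Fin N) (Fin N) F, IsUnit B.det ∧ B.det = δ ∧
      ((1:F) • (1 : Matrix (Fin N) (Fin N) F) - B.transpose⁻¹ * B).det ≠ 0 := by
  haveI : NeZero N := ⟨hNpos.ne'⟩
  obtain ⟨m, hm⟩ := hNeven
  -- the pair-swap involution
  set f : Fin N → Fin N := fun i =>
    if h : (i : ℕ) % 2 = 0 then ⟨(i : ℕ) + 1, by have := i.isLt; omega⟩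
    else ⟨(i : ℕ) - 1, by have := i.isLt; omega⟩ with hf
  have hfval : ∀ i : Fin N, ((f i : Fin N) : ℕ)
      = if (i : ℕ) % 2 = 0 then (i : ℕ) + 1 else (i : ℕ) - 1 := by
    intro i
    by_cases h : (i : ℕ) % 2 = 0 <;> simp [hf, h]
  have hff : Function.Involutive f := by
    intro i
    apply Fin.ext
    by_cases h : (i : ℕ) % 2 = 0
    · have h1 : ((f i : Fin N) : ℕ) = (i : ℕ) + 1 := by rw [hfval, if_pos h]
      have h2 : ((f (f i) : Fin N) : ℕ) = ((i : ℕ) + 1) - 1 := by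
        rw [hfval, h1, if_neg (by omega)]
      omega
    · have h1 : ((f i : Fin N) : ℕ) = (i : ℕ) - 1 := by rw [hfval, if_neg h]
      have h2 : ((f (f i) : Fin N) : ℕ) = ((i : ℕ) - 1) + 1 := by
        rw [hfval, h1, if_pos (by omega)]
      omega
  have hfne : ∀ i, f i ≠ i := by
    intro i hcon
    have h0 := congrArg (Fin.val) hcon
    rw [hfval] at h0
    by_cases h : (i : ℕ) % 2 = 0
    · rw [if_pos h] at h0; omega
    · rw [if_neg h] at h0; omega
  set σ : Equiv.Perm (Fin N) := hff.toPerm with hσ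
  have hσapp : ∀ i, σ i = f i := fun i => congrFun (Function.Involutive.coe_toPerm hff) i
  clear_value σ
  clear hσ
  clear_value f
  clear hf
  set d : Fin N → F := fun i => if i = 0 then δ else 1 with hd
  set B : Matrix (Fin N) (Fin N) F :=
    Matrix.diagonal d + Matrix.of (fun i j : Fin N =>
      if (i : ℕ) % 2 = 0 ∧ j = f i then (1 : F) else 0) with hB
  have hBapp : ∀ i j, B i j = (if i = j then d i else 0)
      + (if (i : ℕ) % 2 = 0 ∧ j = f i then 1 else 0) := by
    intro i j
    rw [hB]
    simp [Matrix.diagonal_apply]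
  -- B is upper triangular
  have htri : B.BlockTriangular id := by
    intro i j hij
    simp only [id] at hij
    rw [hBapp, if_neg (fun h => by subst h; exact lt_irrefl _ hij), if_neg, add_zero]
    rintro ⟨h1, h2⟩
    have h3 := congrArg Fin.val h2
    rw [hfval, if_pos h1] at h3
    have : (j : ℕ) < (i : ℕ) := hij
    omega
  have hBdiag : ∀ i, B i i = d i := by
    intro i
    rw [hBapp, if_pos rfl, if_neg, add_zero]
    rintro ⟨-, h2⟩
    exact hfne i h2.symm
  have hdet : B.det = δ := by
    rw [Matrix.det_of_upperTriangular htri]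
    simp only [hBdiag]
    rw [hd]; simp
  clear_value B
  clear hB
  clear_value d
  clear hd
  have hunit : IsUnit B.det := by rw [hdet]; exact isUnit_iff_ne_zero.mpr hδ
  have hunitT : IsUnit B.transpose.det := by rwa [Matrix.det_transpose]
  refine ⟨B, hunit, hdet, ?_⟩
  have key : (1:F) • (1 : Matrix (Fin N) (Fin N) F) - B.transpose⁻¹ * B
      = B.transpose⁻¹ * (B.transpose - B) := by
    rw [Matrix.mul_sub, Matrix.nonsing_inv_mul _ hunitT, one_smul]
  rw [key, Matrix.det_mul]
  apply mul_ne_zero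
  · rw [Matrix.det_nonsing_inv]
    simpa using hunitT.ne_zero
  -- Bᵀ - B = diagonal e * permMatrix σ
  set e : Fin N → F := fun i => if (i : ℕ) % 2 = 0 then (-1 : F) else 1 with he
  have hperm : ∀ i j, σ.permMatrix F i j = if j = f i then (1:F) else 0 := by
    intro i j
    rw [Equiv.Perm.permMatrix, PEquiv.toMatrix_apply, Equiv.toPEquiv_apply, hσapp]
    simp only [Option.mem_def, Option.some.injEq, eq_comm]
  have hM : B.transpose - B = Matrix.diagonal e * σ.permMatrix F := by
    ext i j
    rw [Matrix.diagonal_mul, Matrix.sub_apply, Matrix.transpose_apply, hBapp, hBapp, hperm]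
    by_cases hi : (i : ℕ) % 2 = 0
    · have h1 : ¬((j : ℕ) % 2 = 0 ∧ i = f j) := by
        rintro ⟨hj, hij⟩
        have h3 := congrArg Fin.val hij
        rw [hfval, if_pos hj] at h3
        omega
      have he1 : e i = -1 := by rw [he]; exact if_pos hi
      by_cases hj : j = f i
      · have hij : ¬ (j = i) := fun h => hfne i (h ▸ hj.symm)
        rw [if_neg hij, if_neg (fun h : i = j => hij h.symm), if_neg h1,
          if_pos ⟨hi, hj⟩, if_pos hj, he1]
        ring
      · rw [if_neg h1, if_neg (fun h : (i:ℕ) % 2 = 0 ∧ j = f i => hj h.2), if_neg hj, he1]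
        ring_nf
        by_cases hij : i = j
        · subst hij; ring
        · rw [if_neg hij, if_neg (fun h : j = i => hij h.symm)]; ring
    · have h2 : ∀ (j' : Fin N), ¬((i : ℕ) % 2 = 0 ∧ j' = f i) := fun _ h => hi h.1
      have he1 : e i = 1 := by rw [he]; exact if_neg hi
      have h3 : ((j : ℕ) % 2 = 0 ∧ i = f j) ↔ j = f i := by
        constructor
        · rintro ⟨hj, hij⟩
          subst hij
          exact (hff j).symm
        · intro hj
          subst hj
          refine ⟨?_, (hff i).symm⟩
          have h4 := hfval i
          rw [if_neg hi] at h4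
          omega
      rw [if_neg (h2 j), he1, one_mul, add_zero]
      by_cases hj : j = f i
      · have hij : ¬ (j = i) := fun h => hfne i (h ▸ hj.symm)
        rw [if_pos (h3.mpr hj), if_pos hj, if_neg (fun h : j = i => hij h),
          if_neg (fun h : i = j => hij h.symm)]
        ring
      · rw [if_neg (fun h => hj (h3.mp h)), if_neg hj, add_zero]
        by_cases hij : i = j
        · subst hij; ring
        · rw [if_neg hij, if_neg (fun h : j = i => hij h.symm)]; ring
  rw [hM, Matrix.det_mul, Matrix.det_diagonal, Matrix.det_permutation]
  apply mul_ne_zero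
  · apply Finset.prod_ne_zero_iff.mpr
    intro i _
    rw [he]
    by_cases h : (i : ℕ) % 2 = 0 <;> simp [h]
  · rcases Int.units_eq_one_or (Equiv.Perm.sign σ) with h | h <;> rw [h] <;> simp

/-- **Lemma 4.5 (second part, even case) of "Geometric non-vanishing" (Ulmer).**
Let `F` be an infinite field, `N` an even positive integer, `α ∈ F`, and
`δ ∈ F` nonzero.  Then there exists an invertible `N × N` matrix `B` over `F`
with `det B = δ` such that, writing `B^∨ = (Bᵀ)⁻¹` for the inverse transpose,
`α` is not an eigenvalue of `B^∨ * B`, i.e. `det (α • 1 - B^∨ * B) ≠ 0`. -/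
theorem exists_det_eq_not_eigenvalue_of_invTranspose_mul_self
    {F : Type*} [Field F] [Infinite F] {N : ℕ} (hNpos : 0 < N) (hNeven : Even N)
    (α : F) (δ : F) (hδ : δ ≠ 0) :
    ∃ B : Matrix (Fin N) (Fin N) F, IsUnit B.det ∧ B.det = δ ∧
      (α • (1 : Matrix (Fin N) (Fin N) F) - B.transpose⁻¹ * B).det ≠ 0 := by
  by_cases hα : α = 1
  · subst hα
    exact aux_eq_one hNpos hNeven δ hδ
  · exact aux_ne_one hNpos α δ hδ hα
end

section
/- Let R be a commutative ring, let a and N be positive integers, let A₀, …, A_{a−1} be N×N matrices over R, and let M be the associated block-cyclic matrix. Then in R[X] one has det(X·I_{aN} − M) = det(X^a·I_N − A_{a−1}A_{a−2}⋯A₀); in other words the characteristic polynomial of M is obtained from the characteristic polynomial of the product A_{a−1}A_{a−2}⋯A₀ by substituting X^a for X. -/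
open Polynomial

/-- The block-cyclic matrix associated to `N × N` matrices `A₀, …, A_{a-1}`:
the `(aN) × (aN)` matrix, with rows and columns indexed by pairs
`(j, x) ∈ (ℤ/aℤ) × {1, …, N}`, whose `(j+1, j)` block is `A j` and all of
whose other blocks vanish; it carries the `j`-th block of coordinates to the
`(j+1)`-st block via `A j`. -/
def blockCyclic {R : Type*} [CommRing R] {a N : ℕ} [NeZero a]
    (A : ZMod a → Matrix (Fin N) (Fin N) R) :
    Matrix (ZMod a × Fin N) (ZMod a × Fin N) R :=
  Matrix.of fun p q => if p.1 = q.1 + 1 then A q.1 p.2 q.2 else 0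

/-!
Number the blocks `0, …, a - 1` and let `T` be the block lower-triangular matrix whose `(i, j)`
block, for `j ≤ i`, is `x ^ (a - 1 - (i - j)) • A_{i-1} ⋯ A_j`. The powers of `x` are chosen so
that in `(x • 1 - M) * T` every block below the diagonal cancels, while the diagonal blocks are
`x ^ a • 1 - A_{a-1} ⋯ A₀` (the wrap-around block) and `x ^ a • 1`; the diagonal blocks of `T`
are `x ^ (a - 1) • 1`. Comparing determinants gives
`det (x • 1 - M) * x ^ k = det (x ^ a • 1 - A_{a-1} ⋯ A₀) * x ^ k` for every `x` in any
commutative ring, and `X ^ k` can be cancelled in `R[X]`.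
-/

open Matrix Finset

theorem Matrix.BlockTriangular.det_of_injective_comp_fst {α β ι R : Type*} [CommRing R]
    [Fintype α] [DecidableEq α] [Fintype ι] [DecidableEq ι] [LinearOrder β] {f : α → β}
    (hf : Function.Injective f) {M : Matrix (α × ι) (α × ι) R}
    (h : M.BlockTriangular fun p => f p.1) :
    M.det = ∏ i, (M.submatrix (Prod.mk i) (Prod.mk i)).det := by
  let _ : LinearOrder α := LinearOrder.lift' f hf
  rw [BlockTriangular.det_fintype (b := Prod.fst) h]
  refine prod_congr rfl fun i _ => ?_
  let e : ι ≃ {p : α × ι // p.1 = i} :=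
    { toFun := fun x => ⟨(i, x), rfl⟩
      invFun := fun p => p.1.2
      left_inv := fun _ => rfl
      right_inv := by rintro ⟨⟨j, x⟩, rfl⟩; rfl }
  rw [← det_submatrix_equiv_self e]
  rfl

theorem Matrix.charpoly_comp_X_pow {R n : Type*} [CommRing R] [Fintype n] [DecidableEq n]
    (M : Matrix n n R) (k : ℕ) :
    M.charpoly.comp (X ^ k) = ((X ^ k : R[X]) • 1 - M.map C).det := by
  rw [charpoly, ← coe_compRingHom_apply, RingHom.map_det]
  congr 1
  ext i j : 1
  by_cases h : i = j <;> simp [h]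

theorem ZMod.val_sub_one_of_ne_zero {n : ℕ} [NeZero n] {j : ZMod n} (hj : j ≠ 0) :
    (j - 1).val = j.val - 1 := by
  have : Fact (1 < n) := ⟨by
    by_contra! h
    obtain rfl : n = 1 := le_antisymm h (Nat.one_le_iff_ne_zero.mpr (NeZero.ne n))
    exact hj (Subsingleton.elim _ _)⟩
  have hj' : (1 : ZMod n).val ≤ j.val := by
    rw [ZMod.val_one]; exact ZMod.val_pos.mpr hj
  rw [ZMod.val_sub hj', ZMod.val_one]

theorem ZMod.add_natCast_val_sub_val {n : ℕ} [NeZero n] {i j : ZMod n} (h : j.val ≤ i.val) :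
    j + ((i.val - j.val : ℕ) : ZMod n) = i := by
  rw [Nat.cast_sub h, ZMod.natCast_zmod_val, ZMod.natCast_zmod_val, add_sub_cancel]

namespace BlockCyclic

variable {S : Type*} [CommRing S] {a N : ℕ} (A : ZMod a → Matrix (Fin N) (Fin N) S)

def pathProd (j : ZMod a) : ℕ → Matrix (Fin N) (Fin N) S
  | 0 => 1
  | n + 1 => A (j + n) * pathProd j n

theorem pathProd_zero_eq_list_prod (n : ℕ) :
    pathProd A 0 n = ((List.range n).reverse.map fun i => A (i : ZMod a)).prod := by
  induction n with
  | zero => rfl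
  | succ n ih => simp [pathProd, ih, List.range_succ]

theorem map_pathProd {T : Type*} [CommRing T] (f : S →+* T) (j : ZMod a) (n : ℕ) :
    (pathProd A j n).map f = pathProd (fun i => (A i).map f) j n := by
  induction n with
  | zero => exact Matrix.map_one _ f.map_zero f.map_one
  | succ n ih => rw [pathProd, pathProd, Matrix.map_mul, ih]

variable (x : S)

noncomputable def triangularizer : Matrix (ZMod a × Fin N) (ZMod a × Fin N) S :=
  of fun p q => if q.1.val ≤ p.1.val then
    x ^ (a - 1 - (p.1.val - q.1.val)) * pathProd A q.1 (p.1.val - q.1.val) p.2 q.2 else 0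

variable {A x}

theorem triangularizer_apply_of_le {p q : ZMod a × Fin N} (h : q.1.val ≤ p.1.val) :
    triangularizer A x p q =
      x ^ (a - 1 - (p.1.val - q.1.val)) * pathProd A q.1 (p.1.val - q.1.val) p.2 q.2 :=
  if_pos h

theorem triangularizer_apply_of_lt {p q : ZMod a × Fin N} (h : p.1.val < q.1.val) :
    triangularizer A x p q = 0 :=
  if_neg h.not_ge

theorem submatrix_triangularizer_self (j : ZMod a) :
    (triangularizer A x).submatrix (Prod.mk j) (Prod.mk j) = x ^ (a - 1) • 1 := by
  ext y z
  simp [triangularizer_apply_of_le, pathProd, one_apply]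

variable [NeZero a]

theorem blockCyclic_mul_apply {ι : Type*} (T : Matrix (ZMod a × Fin N) ι S)
    (p : ZMod a × Fin N) (q : ι) :
    (blockCyclic A * T) p q = ∑ y, A (p.1 - 1) p.2 y * T (p.1 - 1, y) q := by
  have hp (j : ZMod a) : p.1 = j + 1 ↔ p.1 - 1 = j := sub_eq_iff_eq_add.symm
  simp only [mul_apply, blockCyclic, of_apply, Fintype.sum_prod_type, ite_mul, zero_mul, hp]
  simp [sum_ite_irrel]

theorem smul_one_sub_blockCyclic_mul_apply (T : Matrix (ZMod a × Fin N) (ZMod a × Fin N) S)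
    (p q : ZMod a × Fin N) :
    ((x • 1 - blockCyclic A) * T) p q =
      x * T p q - ∑ y, A (p.1 - 1) p.2 y * T (p.1 - 1, y) q := by
  rw [sub_mul, smul_one_mul, Matrix.sub_apply, Matrix.smul_apply, smul_eq_mul,
    blockCyclic_mul_apply]

theorem sum_mul_triangularizer {i : ZMod a} {q : ZMod a × Fin N} (h : q.1.val ≤ i.val)
    (z : Fin N) :
    ∑ y, A i z y * triangularizer A x (i, y) q =
      x ^ (a - 1 - (i.val - q.1.val)) * pathProd A q.1 (i.val - q.1.val + 1) z q.2 := by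
  simp only [triangularizer_apply_of_le (p := (i, _)) h, mul_left_comm _ (x ^ _), ← mul_sum]
  rw [pathProd, ZMod.add_natCast_val_sub_val h, mul_apply]

theorem blockTriangular_smul_one_sub_blockCyclic_mul_triangularizer :
    ((x • 1 - blockCyclic A) * triangularizer A x).BlockTriangular fun p => p.1.val := by
  intro p q (h : q.1.val < p.1.val)
  have hv : (p.1 - 1).val = p.1.val - 1 :=
    ZMod.val_sub_one_of_ne_zero (ZMod.val_pos.mp (by omega))
  have hpa := ZMod.val_lt p.1
  rw [smul_one_sub_blockCyclic_mul_apply, sum_mul_triangularizer (by omega), hv,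
    triangularizer_apply_of_le h.le, ← mul_assoc, ← pow_succ',
    show p.1.val - 1 - q.1.val + 1 = p.1.val - q.1.val by omega,
    show a - 1 - (p.1.val - q.1.val) + 1 = a - 1 - (p.1.val - 1 - q.1.val) by omega, sub_self]

theorem submatrix_smul_one_sub_blockCyclic_mul_triangularizer_of_ne_zero {j : ZMod a}
    (hj : j ≠ 0) :
    ((x • 1 - blockCyclic A) * triangularizer A x).submatrix (Prod.mk j) (Prod.mk j) =
      x ^ a • 1 := by
  ext y z
  have hv : (j - 1).val < j.val := by
    rw [ZMod.val_sub_one_of_ne_zero hj]; exact Nat.sub_lt (ZMod.val_pos.mpr hj) one_pos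
  have hzero (y : Fin N) : triangularizer A x (j - 1, y) (j, z) = 0 :=
    triangularizer_apply_of_lt hv
  have hdiag := congrFun₂ (submatrix_triangularizer_self (A := A) (x := x) j) y z
  simp only [submatrix_apply] at hdiag ⊢
  simp only [smul_one_sub_blockCyclic_mul_apply, hzero, mul_zero, sum_const_zero, sub_zero,
    hdiag, Matrix.smul_apply, smul_eq_mul, ← mul_assoc, ← pow_succ',
    Nat.sub_add_cancel (Nat.one_le_iff_ne_zero.mpr (NeZero.ne a))]

theorem submatrix_smul_one_sub_blockCyclic_mul_triangularizer_zero :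
    ((x • 1 - blockCyclic A) * triangularizer A x).submatrix (Prod.mk 0) (Prod.mk 0) =
      x ^ a • 1 - pathProd A 0 a := by
  ext y z
  have hv : (0 - 1 : ZMod a).val = a - 1 := by
    obtain ⟨n, rfl⟩ := Nat.exists_eq_succ_of_ne_zero (NeZero.ne a)
    rw [zero_sub, ZMod.val_neg_one, Nat.succ_sub_one]
  have hdiag := congrFun₂ (submatrix_triangularizer_self (A := A) (x := x) 0) y z
  simp only [submatrix_apply] at hdiag ⊢
  rw [smul_one_sub_blockCyclic_mul_apply, sum_mul_triangularizer (q := (0, z)) (by simp), hdiag]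
  simp only [hv, ZMod.val_zero, Nat.sub_zero, Nat.sub_self, pow_zero, one_mul,
    Nat.sub_add_cancel (Nat.one_le_iff_ne_zero.mpr (NeZero.ne a)), Matrix.sub_apply,
    Matrix.smul_apply, smul_eq_mul, ← mul_assoc, ← pow_succ']

theorem det_triangularizer : (triangularizer A x).det = x ^ ((a - 1) * N * a) := by
  have h : (triangularizer A x).BlockTriangular fun p => OrderDual.toDual p.1.val :=
    fun _ _ h => triangularizer_apply_of_lt h
  rw [h.det_of_injective_comp_fst (f := fun j => OrderDual.toDual j.val)
    fun _ _ h => ZMod.val_injective a (OrderDual.toDual.injective h)]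
  simp only [submatrix_triangularizer_self, det_smul, det_one, mul_one, Fintype.card_fin,
    prod_const, card_univ, ZMod.card, ← pow_mul]

theorem det_smul_one_sub_blockCyclic_mul_triangularizer :
    ((x • 1 - blockCyclic A) * triangularizer A x).det =
      (x ^ a • 1 - pathProd A 0 a).det * x ^ ((a - 1) * N * a) := by
  rw [blockTriangular_smul_one_sub_blockCyclic_mul_triangularizer.det_of_injective_comp_fst
      (ZMod.val_injective a), ← mul_prod_erase univ _ (mem_univ 0),
    submatrix_smul_one_sub_blockCyclic_mul_triangularizer_zero,
    prod_congr rfl fun j hj => by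
      rw [submatrix_smul_one_sub_blockCyclic_mul_triangularizer_of_ne_zero (ne_of_mem_erase hj)],
    prod_const, card_erase_of_mem (mem_univ _), card_univ, ZMod.card, det_smul, det_one, mul_one,
    Fintype.card_fin]
  ring

theorem det_smul_one_sub_blockCyclic_mul_pow :
    (x • 1 - blockCyclic A).det * x ^ ((a - 1) * N * a) =
      (x ^ a • 1 - pathProd A 0 a).det * x ^ ((a - 1) * N * a) := by
  calc _ = ((x • 1 - blockCyclic A) * triangularizer A x).det := by
        rw [det_mul, det_triangularizer]
    _ = _ := det_smul_one_sub_blockCyclic_mul_triangularizer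

variable (A) in
theorem charmatrix_blockCyclic :
    charmatrix (blockCyclic A) = (X : S[X]) • 1 - blockCyclic fun j => (A j).map C := by
  ext p q : 1
  simp [charmatrix_apply, blockCyclic, one_apply, diagonal_apply, apply_ite C]

end BlockCyclic

open BlockCyclic in
theorem charpoly_blockCyclic_general {R : Type*} [CommRing R] {a N : ℕ} [NeZero a]
    (A : ZMod a → Matrix (Fin N) (Fin N) R) :
    (blockCyclic A).charpoly =
      (((List.range a).reverse.map fun j => A (j : ZMod a)).prod).charpoly.comp (X ^ a) := by
  rw [← pathProd_zero_eq_list_prod, charpoly_comp_X_pow, map_pathProd, charpoly,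
    charmatrix_blockCyclic]
  exact (isRegular_X_pow _).right det_smul_one_sub_blockCyclic_mul_pow

/-- **Sections 7.1.12 and 8.5 of "Geometric non-vanishing" (Ulmer).**
Let `R` be a commutative ring, `a` and `N` positive integers, and
`A₀, …, A_{a-1}` be `N × N` matrices over `R` with associated block-cyclic
matrix `M`.  Then `det (X • 1 - M) = det (X^a • 1 - A_{a-1} ⋯ A₀)`: the
characteristic polynomial of `M` is obtained from the characteristic
polynomial of the product `A_{a-1} A_{a-2} ⋯ A₀` by substituting `X^a`
for `X`. -/
theorem charpoly_blockCyclic {R : Type*} [CommRing R] {a N : ℕ} [NeZero a]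
    (hNpos : 0 < N) (A : ZMod a → Matrix (Fin N) (Fin N) R) :
    (blockCyclic A).charpoly =
      (((List.range a).reverse.map fun j => A (j : ZMod a)).prod).charpoly.comp (X ^ a) :=
  charpoly_blockCyclic_general A
end

section
/- Let F be a field, let a ≥ 2 be an even integer, let N be an odd positive integer, and let ε ∈ F with ε = 1 or ε = −1. Let A₀, …, A_{a−1} be N×N matrices over F and let M be the associated block-cyclic matrix of size aN. Let J be the (aN)×(aN) matrix, with rows and columns indexed by pairs (j, x) with j ∈ ℤ/aℤ and x ∈ {1, …, N}, whose (j, j + a/2) block equals I_N for j = 0, …, a/2 − 1, whose (j, j − a/2) block equals ε·I_N for j = a/2, …, a − 1, and all of whose other blocks are zero. If MᵀJM = J, then every λ ∈ F with λ^a = ε is an eigenvalue of M, i.e., det(λ·I_{aN} − M) = 0. -/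
/-- The Gram matrix `J` of the (anti)symmetric pairing: the `(aN) × (aN)`
matrix whose `(j, j + a/2)` block is `I_N` for `j = 0, …, a/2 - 1`, whose
`(j, j - a/2)` block is `ε • I_N` for `j = a/2, …, a - 1` (note
`j - a/2 ≡ j + a/2 (mod a)` since `a` is even), and all of whose other blocks
vanish. -/
def formJ {R : Type*} [CommRing R] {a N : ℕ} [NeZero a] (ε : R) :
    Matrix (ZMod a × Fin N) (ZMod a × Fin N) R :=
  Matrix.of fun p q =>
    if q.1 = p.1 + ((a / 2 : ℕ) : ZMod a) ∧ p.2 = q.2 then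
      (if p.1.val < a / 2 then 1 else ε)
    else 0

open Matrix

/-- Proved for the generic matrix over `ℤ` and specialized, so that it holds in characteristic 2
as well. -/
theorem Matrix.det_sub_transpose_eq_zero_of_odd {n R : Type*} [Fintype n] [DecidableEq n]
    [CommRing R] (hn : Odd (Fintype.card n)) (M : Matrix n n R) : (M - Mᵀ).det = 0 := by
  let X : Matrix n n (MvPolynomial (n × n) ℤ) := .of fun i j => .X (i, j)
  have hX : (X - Xᵀ).det = 0 := by
    have h := (X - Xᵀ).det_transpose
    rw [transpose_sub, transpose_transpose, ← neg_sub, det_neg, hn.neg_one_pow, neg_one_mul,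
      neg_eq_iff_add_eq_zero, ← two_mul] at h
    exact (mul_eq_zero.mp h).resolve_left two_ne_zero
  let φ := (MvPolynomial.aeval (R := ℤ) fun p : n × n => M p.1 p.2).toRingHom
  have hφ : φ.mapMatrix (X - Xᵀ) = M - Mᵀ := by
    ext i j
    simp [φ, X]
  rw [← hφ, ← RingHom.map_det, hX, map_zero]

theorem det_sub_one_eq_zero_of_transpose_mul_eq_self {n R : Type*} [Fintype n] [DecidableEq n]
    [CommRing R] [IsDomain R] (hn : Odd (Fintype.card n)) {P Q : Matrix n n R} (hP : P.det ≠ 0)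
    (h : Pᵀ * Q = P) : (Q - 1).det = 0 := by
  have hfactor : Pᵀ * (Q - 1) = P - Pᵀ := by rw [mul_sub, h, mul_one]
  have hdet := congrArg det hfactor
  rw [det_mul, det_transpose, det_sub_transpose_eq_zero_of_odd hn] at hdet
  exact (mul_eq_zero.mp hdet).resolve_left hP

section BlockCyclic

variable {R : Type*} [CommRing R] {a N : ℕ}

/-- `cyclicProd A k = A (k-1) * ⋯ * A 1 * A 0`, indices read in `ZMod a`. -/
def cyclicProd (A : ZMod a → Matrix (Fin N) (Fin N) R) : ℕ → Matrix (Fin N) (Fin N) R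
  | 0 => 1
  | k + 1 => A k * cyclicProd A k

theorem det_cyclicProd (A : ZMod a → Matrix (Fin N) (Fin N) R) (k : ℕ) :
    (cyclicProd A k).det = ∏ i ∈ Finset.range k, (A i).det := by
  induction k with
  | zero => simp [cyclicProd]
  | succ k ih => rw [cyclicProd, det_mul, ih, Finset.prod_range_succ, mul_comm]

theorem smul_cyclicProd_transpose_mul_cyclicProd_add {c : ZMod a → R}
    {A : ZMod a → Matrix (Fin N) (Fin N) R} {h : ℕ}
    (hA : ∀ j : ZMod a, c (j + 1) • ((A j)ᵀ * A (j + h)) = c j • 1) (k : ℕ) :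
    c k • ((cyclicProd A k)ᵀ * cyclicProd A (h + k)) = c 0 • cyclicProd A h := by
  induction k with
  | zero => simp [cyclicProd]
  | succ k ih =>
    calc c ↑(k + 1) • ((cyclicProd A (k + 1))ᵀ * cyclicProd A (h + (k + 1)))
        = (cyclicProd A k)ᵀ * (c (k + 1) • ((A k)ᵀ * A (k + h))) * cyclicProd A (h + k) := by
          rw [← add_assoc, cyclicProd, cyclicProd, transpose_mul, Nat.cast_add h k,
            add_comm (h : ZMod a), Nat.cast_succ]
          simp only [Matrix.mul_smul, Matrix.smul_mul, mul_assoc]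
      _ = c 0 • cyclicProd A h := by rw [hA, Matrix.mul_smul, mul_one, Matrix.smul_mul, ih]

theorem det_ne_zero_of_smul_transpose_mul_shift [IsDomain R] {c : ZMod a → R}
    {A : ZMod a → Matrix (Fin N) (Fin N) R} {h : ℕ} (hc : ∀ j, c j ≠ 0)
    (hA : ∀ j : ZMod a, c (j + 1) • ((A j)ᵀ * A (j + h)) = c j • 1) (j : ZMod a) :
    (A j).det ≠ 0 := by
  have hdet := congrArg det (hA j)
  rw [det_smul, det_smul, det_mul, det_transpose, det_one, mul_one] at hdet
  intro hj
  rw [hj, zero_mul, mul_zero] at hdet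
  exact pow_ne_zero _ (hc j) hdet.symm

def formJSign (ε : R) (j : ZMod a) : R :=
  if j.val < a / 2 then 1 else ε

theorem formJSign_ne_zero {ε : R} (hε : ε ≠ 0) (j : ZMod a) : formJSign ε j ≠ 0 := by
  have : Nontrivial R := nontrivial_of_ne ε 0 hε
  unfold formJSign
  split_ifs
  exacts [one_ne_zero, hε]

theorem formJSign_zero (ha : 0 < a / 2) (ε : R) : formJSign ε (0 : ZMod a) = 1 := by
  simp [formJSign, ha]

variable [NeZero a]

theorem formJSign_natCast_half (ε : R) : formJSign ε ((a / 2 : ℕ) : ZMod a) = ε := by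
  simp [formJSign, ZMod.val_cast_of_lt (Nat.div_lt_self (NeZero.pos a) one_lt_two)]

theorem formJ_apply (ε : R) (p q : ZMod a × Fin N) :
    formJ ε p q = if q.1 = p.1 + ((a / 2 : ℕ) : ZMod a) ∧ p.2 = q.2 then formJSign ε p.1 else 0 :=
  rfl

theorem blockCyclic_mulVec_apply_add_one (A : ZMod a → Matrix (Fin N) (Fin N) R)
    (w : ZMod a × Fin N → R) (j : ZMod a) (x : Fin N) :
    (blockCyclic A *ᵥ w) (j + 1, x) = (A j *ᵥ fun y => w (j, y)) x := by
  simp [blockCyclic, mulVec, dotProduct, Fintype.sum_prod_type]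

theorem blockCyclic_transpose_mul_formJ_mul_apply (ε : R) (A : ZMod a → Matrix (Fin N) (Fin N) R)
    (j : ZMod a) (x y : Fin N) :
    ((blockCyclic A)ᵀ * formJ ε * blockCyclic A : Matrix (ZMod a × Fin N) _ R)
        (j, x) (j + ((a / 2 : ℕ) : ZMod a), y) =
      formJSign ε (j + 1) * ((A j)ᵀ * A (j + ((a / 2 : ℕ) : ZMod a))) x y := by
  have hshift (k : ZMod a) :
      j + ((a / 2 : ℕ) : ZMod a) + 1 = k + ((a / 2 : ℕ) : ZMod a) ↔ k = j + 1 := by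
    rw [add_right_comm, add_left_inj, eq_comm]
  simp only [blockCyclic, mul_apply, transpose_apply, of_apply, formJ_apply, ite_and, mul_ite,
    ite_mul, zero_mul, mul_zero, Fintype.sum_prod_type, Finset.sum_ite_irrel, Finset.sum_ite_eq',
    Finset.mem_univ, ↓reduceIte, Finset.sum_const_zero, hshift, Finset.mul_sum]
  exact Finset.sum_congr rfl fun _ _ => by ring

theorem formJSign_smul_transpose_mul_eq_of_blockCyclic_preserves_formJ (ε : R)
    (A : ZMod a → Matrix (Fin N) (Fin N) R)
    (hJ : (blockCyclic A)ᵀ * formJ ε * blockCyclic A = formJ ε) (j : ZMod a) :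
    formJSign ε (j + 1) • ((A j)ᵀ * A (j + ((a / 2 : ℕ) : ZMod a))) = formJSign ε j • 1 := by
  ext x y
  have h := congrFun (congrFun hJ (j, x)) (j + ((a / 2 : ℕ) : ZMod a), y)
  rw [blockCyclic_transpose_mul_formJ_mul_apply] at h
  simpa [formJ_apply, one_apply] using h

theorem det_smul_one_sub_blockCyclic_eq_zero [IsDomain R] (A : ZMod a → Matrix (Fin N) (Fin N) R)
    {lam : R} (hlam : lam ≠ 0) {v : Fin N → R} (hv : v ≠ 0)
    (hQ : cyclicProd A a *ᵥ v = lam ^ a • v) :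
    (lam • 1 - blockCyclic A).det = 0 := by
  let u : ZMod a → Fin N → R := fun j => lam ^ (a - 1 - j.val) • (cyclicProd A j.val *ᵥ v)
  have hu (j : ZMod a) : A j *ᵥ u j = lam • u (j + 1) := by
    obtain ⟨i, hi, rfl⟩ : ∃ i < a, (i : ZMod a) = j := ⟨j.val, j.val_lt, ZMod.natCast_zmod_val j⟩
    have hA : A i *ᵥ u i = lam ^ (a - 1 - i) • (cyclicProd A (i + 1) *ᵥ v) := by
      simp only [u, ZMod.val_cast_of_lt hi, mulVec_smul, mulVec_mulVec, cyclicProd]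
    by_cases hia : i + 1 = a
    · have h0 : (i : ZMod a) + 1 = 0 := by rw [← Nat.cast_add_one, hia, ZMod.natCast_self]
      rw [hA, h0, hia, hQ, show a - 1 - i = 0 by omega]
      simp only [u, ZMod.val_zero, cyclicProd, one_mulVec, smul_smul, ← pow_succ', pow_zero,
        one_mul]
      rw [show a - 1 - 0 + 1 = a by omega]
    · replace hia : i + 1 < a := by omega
      rw [hA, ← Nat.cast_succ]
      simp only [u, ZMod.val_cast_of_lt hia, smul_smul, ← pow_succ']
      congr 2
      omega
  let w : ZMod a × Fin N → R := fun p => u p.1 p.2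
  have hw : w ≠ 0 := by
    obtain ⟨x, hx⟩ := Function.ne_iff.mp hv
    refine Function.ne_iff.mpr ⟨(0, x), ?_⟩
    simpa [w, u, cyclicProd, hlam] using hx
  refine exists_mulVec_eq_zero_iff.mp ⟨w, hw, ?_⟩
  ext ⟨j, x⟩
  rw [← sub_add_cancel j 1, sub_mulVec, Pi.sub_apply, blockCyclic_mulVec_apply_add_one, hu]
  simp [w, smul_mulVec, one_mulVec]

end BlockCyclic

theorem blockCyclic_forced_eigenvalues_general
    {F : Type*} [Field F] {a N : ℕ} [NeZero a]
    (haeven : Even a) (hNodd : Odd N)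
    (ε : F) (hε : ε = 1 ∨ ε = -1)
    (A : ZMod a → Matrix (Fin N) (Fin N) F)
    (hJ : (blockCyclic A).transpose * formJ ε * blockCyclic A = formJ ε) :
    ∀ lam : F, lam ^ a = ε →
      (lam • (1 : Matrix (ZMod a × Fin N) (ZMod a × Fin N) F) - blockCyclic A).det = 0 := by
  intro lam hlam
  have hεε : ε * ε = 1 := by rcases hε with rfl | rfl <;> norm_num
  have hε0 : ε ≠ 0 := left_ne_zero_of_mul_eq_one hεε
  have hlam0 : lam ≠ 0 := by
    rintro rfl
    exact hε0 (by rw [← hlam, zero_pow (NeZero.ne a)])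
  have hhalf : a / 2 + a / 2 = a ∧ 0 < a / 2 := by
    obtain ⟨r, hr⟩ := haeven
    have := NeZero.ne a
    omega
  have hrel := formJSign_smul_transpose_mul_eq_of_blockCyclic_preserves_formJ ε A hJ
  let P := cyclicProd A (a / 2)
  have hP : P.det ≠ 0 := by
    rw [det_cyclicProd]
    exact Finset.prod_ne_zero_iff.mpr fun i _ =>
      det_ne_zero_of_smul_transpose_mul_shift (formJSign_ne_zero hε0) hrel i
  have hPQ : Pᵀ * (ε • cyclicProd A a) = P := by
    have h := smul_cyclicProd_transpose_mul_cyclicProd_add hrel (a / 2)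
    rwa [hhalf.1, formJSign_natCast_half, formJSign_zero hhalf.2, one_smul,
      ← Matrix.mul_smul] at h
  obtain ⟨v, hv, hQv⟩ := exists_mulVec_eq_zero_iff.mpr
    (det_sub_one_eq_zero_of_transpose_mul_eq_self (by rwa [Fintype.card_fin]) hP hPQ)
  refine det_smul_one_sub_blockCyclic_eq_zero A hlam0 hv ?_
  rw [sub_mulVec, one_mulVec, sub_eq_zero, smul_mulVec] at hQv
  calc cyclicProd A a *ᵥ v = ε • (ε • cyclicProd A a *ᵥ v) := by rw [smul_smul, hεε, one_smul]
    _ = lam ^ a • v := by rw [hQv, hlam]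

/-- **Linear-algebra core of Proposition 4.4 of "Geometric non-vanishing"
(Ulmer).** Let `F` be a field, `a ≥ 2` an even integer, `N` an odd positive
integer, and `ε = ±1` in `F`.  Let `A₀, …, A_{a-1}` be `N × N` matrices over
`F` with associated block-cyclic matrix `M` of size `aN`, and let `J` be the
Gram matrix described above.  If `Mᵀ J M = J`, then every `λ ∈ F` with
`λ^a = ε` is an eigenvalue of `M`, i.e. `det (λ • 1 - M) = 0`. -/
theorem blockCyclic_forced_eigenvalues
    {F : Type*} [Field F] {a N : ℕ} [NeZero a]
    (ha : 2 ≤ a) (haeven : Even a) (hNpos : 0 < N) (hNodd : Odd N)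
    (ε : F) (hε : ε = 1 ∨ ε = -1)
    (A : ZMod a → Matrix (Fin N) (Fin N) F)
    (hJ : (blockCyclic A).transpose * formJ ε * blockCyclic A = formJ ε) :
    ∀ lam : F, lam ^ a = ε →
      (lam • (1 : Matrix (ZMod a × Fin N) (ZMod a × Fin N) F) - blockCyclic A).det = 0 :=
  blockCyclic_forced_eigenvalues_general haeven hNodd ε hε A hJ
end

section
/- Let q be a nonzero complex number, let N be a natural number, and let β₁, …, β_N be complex numbers. Then there exists a positive integer b such that for every positive integer n coprime to b and every index i, one has βᵢⁿ = qⁿ if and only if βᵢ = q. -/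
/-- **Key computation in Lemma 10.3 of "Geometric non-vanishing" (Ulmer).**
Let `q` be a nonzero complex number, `N` a natural number, and `β₁, …, β_N`
complex numbers.  Then there is a positive integer `b` such that for every
positive integer `n` coprime to `b` and every index `i`, one has
`βᵢ ^ n = q ^ n` if and only if `βᵢ = q`. -/
theorem exists_b_pow_eq_pow_iff_eq
    (q : ℂ) (hq : q ≠ 0) (N : ℕ) (β : Fin N → ℂ) :
    ∃ b : ℕ, 0 < b ∧ ∀ n : ℕ, 0 < n → Nat.Coprime n b →
      ∀ i : Fin N, β i ^ n = q ^ n ↔ β i = q := by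
  refine ⟨∏ i : Fin N, max 1 (orderOf (β i / q)), Finset.prod_pos fun i _ => ?_, ?_⟩
  · exact lt_of_lt_of_le one_pos (le_max_left _ _)
  intro n hn hcop i
  constructor
  · intro h
    have hr : (β i / q) ^ n = 1 := by
      rw [div_pow, h, div_self (pow_ne_zero _ hq)]
    have hd : orderOf (β i / q) ∣ n := orderOf_dvd_of_pow_eq_one hr
    have hdpos : 0 < orderOf (β i / q) := by
      rcases Nat.eq_zero_or_pos (orderOf (β i / q)) with h0 | h0
      · rw [h0] at hd
        omega
      · exact h0
    have hdb : orderOf (β i / q) ∣ ∏ i : Fin N, max 1 (orderOf (β i / q)) := by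
      refine dvd_trans ?_ (Finset.dvd_prod_of_mem _ (Finset.mem_univ i))
      exact dvd_of_eq (max_eq_right hdpos).symm
    have : orderOf (β i / q) ∣ Nat.gcd n (∏ i : Fin N, max 1 (orderOf (β i / q))) :=
      Nat.dvd_gcd hd hdb
    rw [hcop] at this
    have := orderOf_eq_one_iff.mp (Nat.dvd_one.mp this)
    field_simp at this
    exact this
  · intro h; rw [h]
end

section
/- With notation as in the context, for every i ∈ ℤ/dℤ: there exists a nondegenerate G-invariant bilinear form on the representation σ_{o(i)} if and only if −o(i) = o(i), i.e., {−j : j ∈ o(i)} = o(i); and when −o(i) = o(i), every G-invariant bilinear form on σ_{o(i)} is symmetric. -/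
namespace GeometricNonvanishing

set_option linter.unusedSectionVars false

/-- The underlying type of the semidirect product `G = (ℤ/dℤ) ⋊ (ℤ/aℤ)`, in
which `j : ℤ/aℤ` acts on `ℤ/dℤ` by multiplication by `u^j` for a fixed unit
`u` of `ℤ/dℤ` of multiplicative order `a` (`u` is a phantom parameter
recording the action). -/
@[ext]
structure Gsd (d a : ℕ) (u : (ZMod d)ˣ) where
  /-- the `ℤ/dℤ`-component -/
  x : ZMod d
  /-- the `ℤ/aℤ`-component -/
  j : ZMod a

namespace Gsd

variable {d a : ℕ} {u : (ZMod d)ˣ}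

/-- `u ^ j` for `j : ZMod a`; well behaved when `u ^ a = 1`. -/
def upow [NeZero a] (u : (ZMod d)ˣ) (j : ZMod a) : (ZMod d)ˣ := u ^ j.val

section
variable [NeZero a] [hord : Fact (orderOf u = a)]

lemma upow_add (j k : ZMod a) : upow u (j + k) = upow u j * upow u k := by
  unfold upow
  rw [← pow_add]
  apply pow_eq_pow_iff_modEq.mpr
  rw [hord.out, ZMod.val_add]
  exact Nat.mod_modEq _ a

lemma upow_zero : upow u (0 : ZMod a) = 1 := by
  unfold upow
  rw [ZMod.val_zero, pow_zero]

lemma upow_neg_mul (j : ZMod a) : upow u (-j) * upow u j = 1 := by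
  rw [← upow_add, neg_add_cancel, upow_zero]

instance : Mul (Gsd d a u) :=
  ⟨fun g h => ⟨g.x + (upow u g.j : ZMod d) * h.x, g.j + h.j⟩⟩
instance : One (Gsd d a u) := ⟨⟨0, 0⟩⟩
instance : Inv (Gsd d a u) :=
  ⟨fun g => ⟨-((upow u (-g.j) : ZMod d) * g.x), -g.j⟩⟩

@[simp] lemma mul_x (g h : Gsd d a u) :
    (g * h).x = g.x + (upow u g.j : ZMod d) * h.x := rfl
@[simp] lemma mul_j (g h : Gsd d a u) : (g * h).j = g.j + h.j := rfl
@[simp] lemma one_x : (1 : Gsd d a u).x = 0 := rfl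
@[simp] lemma one_j : (1 : Gsd d a u).j = 0 := rfl
@[simp] lemma inv_x (g : Gsd d a u) :
    (g⁻¹).x = -((upow u (-g.j) : ZMod d) * g.x) := rfl
@[simp] lemma inv_j (g : Gsd d a u) : (g⁻¹).j = -g.j := rfl

/-- The semidirect product group structure on `Gsd d a u`. -/
instance instGroup : Group (Gsd d a u) where
  mul_assoc g₁ g₂ g₃ := by
    ext
    · simp only [mul_x, mul_j, upow_add, Units.val_mul]
      ring
    · simp only [mul_j]
      exact add_assoc _ _ _
  one_mul g := by
    ext
    · simp [upow_zero]
    · simp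
  mul_one g := by
    ext <;> simp
  inv_mul_cancel g := by
    ext
    · simp
    · simp

variable (u) in
/-- The orbit `o(i) = {u^j · i : j}` of `i ∈ ℤ/dℤ` under multiplication
by the unit `u`. -/
def orb (i : ZMod d) : Finset (ZMod d) :=
  Finset.image (fun j : ZMod a => (upow u j : ZMod d) * i) Finset.univ

variable (u) in
/-- The subgroup `H_i = (ℤ/dℤ) ⋊ S_i` of `Gsd d a u`, where
`S_i = {j : u^j · i = i}` is the stabilizer of `i`. -/
def Hsub (i : ZMod d) : Subgroup (Gsd d a u) where
  carrier := {g | (upow u g.j : ZMod d) * i = i}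
  mul_mem' := by
    intro g h hg hh
    show (upow u (g * h).j : ZMod d) * i = i
    rw [mul_j, upow_add, Units.val_mul, mul_assoc]
    rw [show (upow u h.j : ZMod d) * i = i from hh]
    exact hg
  one_mem' := by
    show (upow u (1 : Gsd d a u).j : ZMod d) * i = i
    rw [one_j, upow_zero, Units.val_one, one_mul]
  inv_mem' := by
    intro g hg
    show (upow u (g⁻¹).j : ZMod d) * i = i
    rw [inv_j]
    have hg' : (upow u g.j : ZMod d) * i = i := hg
    calc (upow u (-g.j) : ZMod d) * i
        = (upow u (-g.j) : ZMod d) * ((upow u g.j : ZMod d) * i) := by rw [hg']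
      _ = ((upow u (-g.j) * upow u g.j : (ZMod d)ˣ) : ZMod d) * i := by
            rw [Units.val_mul, mul_assoc]
      _ = i := by rw [upow_neg_mul, Units.val_one, one_mul]

variable (u) in
/-- The subgroup `H = {0} ⋊ (ℤ/aℤ)` of `Gsd d a u`. -/
def Hax : Subgroup (Gsd d a u) where
  carrier := {g | g.x = 0}
  mul_mem' := by
    intro g h hg hh
    show (g * h).x = 0
    rw [mul_x, show g.x = 0 from hg, show h.x = 0 from hh, mul_zero, add_zero]
  one_mem' := rfl
  inv_mem' := by
    intro g hg
    show (g⁻¹).x = 0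
    rw [inv_x, show g.x = 0 from hg, mul_zero, neg_zero]

end

/-- The character `χ̃_i (x, s) = ζ^{i·x}` of the subgroup `H_i`, extended as a
function to all of `Gsd d a u` (here `ζ` is a fixed primitive `d`-th root of
unity in `ℂ`). -/
noncomputable def chi (ζ : ℂ) (i : ZMod d) (g : Gsd d a u) : ℂ :=
  ζ ^ (i * g.x).val

section
variable [NeZero a] [Fact (orderOf u = a)]

/-- The space of the representation of `Gsd d a u` induced from the character
`χ` of the subgroup `H'`: the space of functions `φ : G → ℂ` with
`φ (g * h) = χ h * φ g` for all `h ∈ H'`. -/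
noncomputable def ind (H' : Subgroup (Gsd d a u)) (χ : Gsd d a u → ℂ) :
    Submodule ℂ (Gsd d a u → ℂ) where
  carrier := {φ | ∀ g h, h ∈ H' → φ (g * h) = χ h * φ g}
  add_mem' := by
    intro φ ψ hφ hψ g h hh
    simp only [Pi.add_apply, hφ g h hh, hψ g h hh]
    ring
  zero_mem' := by
    intro g h hh
    simp
  smul_mem' := by
    intro c φ hφ g h hh
    simp only [Pi.smul_apply, hφ g h hh, smul_eq_mul]
    ring

lemma mem_ind {H' : Subgroup (Gsd d a u)} {χ : Gsd d a u → ℂ}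
    {φ : Gsd d a u → ℂ} :
    φ ∈ ind H' χ ↔ ∀ g h, h ∈ H' → φ (g * h) = χ h * φ g := Iff.rfl

/-- The action of `Gsd d a u` on `ind H' χ` by left translation:
`(g · φ) g' = φ (g⁻¹ g')`. -/
noncomputable def rho (H' : Subgroup (Gsd d a u)) (χ : Gsd d a u → ℂ) :
    Representation ℂ (Gsd d a u) (ind H' χ) where
  toFun g :=
    { toFun := fun φ => ⟨fun g' => (φ : Gsd d a u → ℂ) (g⁻¹ * g'), by
        intro g'' h hh
        show (φ : Gsd d a u → ℂ) (g⁻¹ * (g'' * h))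
            = χ h * (φ : Gsd d a u → ℂ) (g⁻¹ * g'')
        rw [← mul_assoc]
        exact φ.2 (g⁻¹ * g'') h hh⟩
      map_add' := by intro φ ψ; ext g'; rfl
      map_smul' := by intro cc φ; ext g'; rfl }
  map_one' := by
    apply LinearMap.ext
    intro φ
    apply Subtype.ext
    funext g'
    simp
  map_mul' := by
    intro g₁ g₂
    apply LinearMap.ext
    intro φ
    apply Subtype.ext
    funext g'
    show (φ : Gsd d a u → ℂ) ((g₁ * g₂)⁻¹ * g')
        = (φ : Gsd d a u → ℂ) (g₂⁻¹ * (g₁⁻¹ * g'))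
    rw [mul_inv_rev, mul_assoc]

end

end Gsd

/-!
The normal subgroup `ℤ/dℤ` acts diagonally on `σ_{o(i)}`: with `ψ x = ζ ^ x`, the vectors
`weightVec k` (supported on the cosets `⟨·, j⟩` with `u⁻ʲ i = k`) span it, and `⟨x, 0⟩` acts on
`weightVec k` by `ψ (-k x)`. An invariant form can therefore pair `weightVec k` only with
`weightVec (-k)`, so a nondegenerate one forces `-i ∈ o(i)`. Conversely, if `u⁻ᵐ i = -i`, pairing
the values at `⟨0, j⟩` and `⟨0, j + m⟩` gives a nondegenerate invariant form. Every invariant form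
is symmetric, because when `k' = -k` some `⟨0, t⟩` swaps `weightVec k` and `weightVec k'`.
-/

theorem _root_.LinearMap.BilinForm.apply_eq_zero_of_eigenvalue_mul_ne_one {R M : Type*}
    [CommRing R] [NoZeroDivisors R] [AddCommGroup M] [Module R M] {B : LinearMap.BilinForm R M}
    {T : M →ₗ[R] M} (hB : ∀ v w, B (T v) (T w) = B v w) {v w : M} {c c' : R} (hv : T v = c • v)
    (hw : T w = c' • w) (hcc' : c * c' ≠ 1) : B v w = 0 := by
  have h := hB v w
  rw [hv, hw, map_smul, map_smul, LinearMap.smul_apply, smul_eq_mul, smul_eq_mul] at h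
  have h' : (c * c' - 1) * B v w = 0 := by linear_combination h
  exact (mul_eq_zero.mp h').resolve_left (sub_ne_zero.mpr hcc')

theorem _root_.LinearMap.BilinForm.isSymm_of_span_eq_top {R M ι : Type*} [CommSemiring R]
    [AddCommMonoid M] [Module R M] {B : LinearMap.BilinForm R M} {v : ι → M}
    (hv : Submodule.span R (Set.range v) = ⊤) (h : ∀ i j, B (v i) (v j) = B (v j) (v i)) :
    B.IsSymm :=
  LinearMap.BilinForm.isSymm_iff.mpr <| LinearMap.isSymm_iff_eq_flip.mpr <|
    LinearMap.ext_on_range hv fun i => LinearMap.ext_on_range hv fun j => h i j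

def IsInvariantForm {k G V : Type*} [CommSemiring k] [Monoid G] [AddCommMonoid V] [Module k V]
    (ρ : Representation k G V) (B : LinearMap.BilinForm k V) : Prop :=
  ∀ g v w, B (ρ g v) (ρ g w) = B v w

namespace Gsd

open Finset

variable {d a : ℕ} [NeZero a] {u : (ZMod d)ˣ}

variable (u) in
/-- On the coset `⟨·, j⟩` the normal subgroup `ℤ/dℤ` acts on the induced representation through
`x ↦ ψ (-(weight u i j * x))`. -/
def weight (i : ZMod d) (j : ZMod a) : ZMod d := (upow u (-j) : ZMod d) * i

variable [Fact (orderOf u = a)]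

theorem upow_mul_upow_neg (j : ZMod a) : (upow u j : ZMod d) * upow u (-j) = 1 := by
  rw [← Units.val_mul, ← upow_add, add_neg_cancel, upow_zero, Units.val_one]

theorem mem_Hsub {i : ZMod d} {g : Gsd d a u} : g ∈ Hsub u i ↔ (upow u g.j : ZMod d) * i = i :=
  Iff.rfl

theorem weight_zero (i : ZMod d) : weight u i (0 : ZMod a) = i := by
  rw [weight, neg_zero, upow_zero, Units.val_one, one_mul]

theorem weight_add (i : ZMod d) (j t : ZMod a) :
    weight u i (j + t) = upow u (-t) * weight u i j := by
  rw [weight, weight, neg_add, add_comm, upow_add, Units.val_mul, mul_assoc]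

theorem upow_mul_weight (i : ZMod d) (j : ZMod a) : (upow u j : ZMod d) * weight u i j = i := by
  rw [weight, ← mul_assoc, upow_mul_upow_neg, one_mul]

theorem weight_sub (i : ZMod d) (j t : ZMod a) :
    weight u i (j - t) = upow u t * weight u i j := by
  rw [← sub_add_cancel j t, weight_add, add_sub_cancel_right, ← mul_assoc, upow_mul_upow_neg,
    one_mul]

theorem weight_eq_weight_iff {i : ZMod d} {j j' : ZMod a} :
    weight u i j = weight u i j' ↔ (⟨0, j - j'⟩ : Gsd d a u) ∈ Hsub u i := by
  rw [mem_Hsub, ← (upow u j).mul_right_inj, upow_mul_weight, ← weight_sub, weight, neg_sub,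
    eq_comm]

theorem card_weight_eq (i : ZMod d) (j : ZMod a) :
    #{t : ZMod a | weight u i t = weight u i j} = #{t : ZMod a | weight u i t = i} := by
  refine Finset.card_equiv (Equiv.subRight j) fun t => ?_
  simp only [mem_filter, mem_univ, true_and, Equiv.subRight_apply, weight_sub]
  conv_lhs => rw [← (upow u j).mul_right_inj, upow_mul_weight]

section Character

variable {ψ : AddChar (ZMod d) ℂ} {i : ZMod d}

local notation "V" => ind (Hsub (a := a) u i) (fun g => ψ (i * Gsd.x g))
local notation "σ" => rho (Hsub (a := a) u i) (fun g => ψ (i * Gsd.x g))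

variable (u ψ i) in
noncomputable def coord (j : ZMod a) : V →ₗ[ℂ] ℂ :=
  (LinearMap.proj (⟨0, j⟩ : Gsd d a u)).comp (Submodule.subtype _)

theorem coord_apply (j : ZMod a) (φ : V) : coord u ψ i j φ = (φ : Gsd d a u → ℂ) ⟨0, j⟩ := rfl

theorem apply_mk_of_mem {φ : Gsd d a u → ℂ} (hφ : φ ∈ V) (x : ZMod d) (j : ZMod a) :
    φ ⟨x, j⟩ = ψ (weight u i j * x) * φ ⟨0, j⟩ := by
  have hmem : (⟨upow u (-j) * x, 0⟩ : Gsd d a u) ∈ Hsub u i := by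
    rw [mem_Hsub, upow_zero, Units.val_one, one_mul]
  have hprod : (⟨0, j⟩ : Gsd d a u) * ⟨upow u (-j) * x, 0⟩ = ⟨x, j⟩ := by
    ext
    · rw [mul_x, ← mul_assoc, upow_mul_upow_neg, zero_add, one_mul]
    · exact add_zero j
  rw [← hprod, hφ _ _ hmem]
  beta_reduce
  rw [weight, mul_right_comm, mul_comm i]

theorem coord_eq_of_weight_eq (φ : V) {j j' : ZMod a} (h : weight u i j = weight u i j') :
    coord u ψ i j φ = coord u ψ i j' φ := by
  have hprod : (⟨0, j'⟩ : Gsd d a u) * ⟨0, j - j'⟩ = ⟨0, j⟩ := by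
    ext
    · rw [mul_x, mul_zero, add_zero]
    · exact add_sub_cancel j' j
  rw [coord_apply, coord_apply, ← hprod, φ.2 _ _ (weight_eq_weight_iff.mp h)]
  beta_reduce
  rw [mul_zero, AddChar.map_zero_eq_one, one_mul]

theorem ext_of_coord {φ φ' : V} (h : ∀ j, coord u ψ i j φ = coord u ψ i j φ') : φ = φ' := by
  ext ⟨x, j⟩
  rw [apply_mk_of_mem φ.2, apply_mk_of_mem φ'.2]
  exact congrArg _ (h j)

theorem coord_rho (g : Gsd d a u) (φ : V) (j : ZMod a) :
    coord u ψ i j (σ g φ) = ψ (-(weight u i j * g.x)) * coord u ψ i (j - g.j) φ := by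
  have hprod : g⁻¹ * ⟨0, j⟩ = ⟨-(upow u (-g.j) * g.x), j - g.j⟩ := by
    ext
    · rw [mul_x, inv_x, mul_zero, add_zero]
    · rw [mul_j, inv_j, neg_add_eq_sub]
  rw [coord_apply, coord_apply]
  change (φ : Gsd d a u → ℂ) (g⁻¹ * ⟨0, j⟩) = _
  rw [hprod, apply_mk_of_mem φ.2, mul_neg, ← mul_assoc, mul_comm (weight u i _), ← weight_add,
    sub_add_cancel]

variable (u ψ i) in
noncomputable def weightVec (k : ZMod d) : V :=
  ⟨fun g => if weight u i g.j = k then ψ (k * g.x) else 0, fun g h hh => by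
    beta_reduce
    have hw : weight u i (g * h).j = weight u i g.j := by
      rw [weight_eq_weight_iff, mul_j, add_sub_cancel_left]
      exact hh
    rw [hw]
    split_ifs with hk
    · rw [mul_x, mul_add, ← mul_assoc, ← hk, mul_comm _ (upow u g.j : ZMod d), upow_mul_weight,
        AddChar.map_add_eq_mul, mul_comm]
    · rw [mul_zero]⟩

theorem coord_weightVec (k : ZMod d) (j : ZMod a) :
    coord u ψ i j (weightVec u ψ i k) = if weight u i j = k then 1 else 0 := by
  change (if weight u i j = k then ψ (k * 0) else 0) = _
  rw [mul_zero, AddChar.map_zero_eq_one]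

theorem rho_weightVec (g : Gsd d a u) (k : ZMod d) :
    σ g (weightVec u ψ i k) =
      ψ (-(upow u (-g.j) * k * g.x)) • weightVec u ψ i (upow u (-g.j) * k) := by
  refine ext_of_coord fun j => ?_
  have hj : weight u i (j - g.j) = k ↔ weight u i j = upow u (-g.j) * k := by
    rw [← (upow u (-g.j)).mul_right_inj, ← weight_add, sub_add_cancel]
  rw [coord_rho, map_smul, coord_weightVec, coord_weightVec, smul_eq_mul]
  simp only [hj]
  split_ifs with h
  · rw [h]
  · rw [mul_zero, mul_zero]

theorem sum_coord_of_weight_eq (φ : V) (j : ZMod a) :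
    ∑ t with weight u i t = weight u i j, coord u ψ i t φ =
      #{t : ZMod a | weight u i t = i} * coord u ψ i j φ := by
  rw [Finset.sum_congr rfl fun t ht => coord_eq_of_weight_eq φ (mem_filter.mp ht).2,
    sum_const, nsmul_eq_mul, card_weight_eq]

theorem card_weight_eq_ne_zero (i : ZMod d) : (#{t : ZMod a | weight u i t = i} : ℂ) ≠ 0 :=
  Nat.cast_ne_zero.mpr <| card_ne_zero.mpr ⟨0, mem_filter.mpr ⟨mem_univ _, weight_zero i⟩⟩

theorem eq_sum_smul_weightVec (φ : V) :
    φ = (#{t : ZMod a | weight u i t = i} : ℂ)⁻¹ •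
      ∑ j, coord u ψ i j φ • weightVec u ψ i (weight u i j) := by
  refine ext_of_coord fun j => ?_
  simp only [map_smul, map_sum, coord_weightVec, smul_eq_mul, mul_ite, mul_one, mul_zero]
  rw [← sum_filter]
  simp only [eq_comm (a := weight u i j)]
  rw [sum_coord_of_weight_eq, inv_mul_cancel_left₀ (card_weight_eq_ne_zero i)]

theorem span_range_weightVec :
    Submodule.span ℂ (Set.range fun j : ZMod a => weightVec (a := a) u ψ i (weight u i j)) = ⊤ :=
  Submodule.eq_top_iff'.mpr fun φ => (eq_sum_smul_weightVec φ).symm ▸ Submodule.smul_mem _ _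
    (Submodule.sum_mem _ fun j _ => Submodule.smul_mem _ _ (Submodule.subset_span ⟨j, rfl⟩))

theorem rho_mk_zero_weightVec (t : ZMod a) (k : ZMod d) :
    σ ⟨0, t⟩ (weightVec u ψ i k) = weightVec u ψ i (upow u (-t) * k) := by
  rw [rho_weightVec, mul_zero, neg_zero, AddChar.map_zero_eq_one, one_smul]

theorem rho_one_zero_weightVec (k : ZMod d) :
    σ ⟨1, 0⟩ (weightVec u ψ i k) = ψ (-k) • weightVec u ψ i k := by
  rw [rho_weightVec, neg_zero, upow_zero, Units.val_one, one_mul, mul_one]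

theorem apply_weightVec_eq_zero_of_isInvariantForm [NeZero d] (hψ : ψ.IsPrimitive)
    {B : LinearMap.BilinForm ℂ V} (hB : IsInvariantForm σ B) {k k' : ZMod d} (hkk' : k + k' ≠ 0) :
    B (weightVec u ψ i k) (weightVec u ψ i k') = 0 := by
  refine B.apply_eq_zero_of_eigenvalue_mul_ne_one (hB ⟨1, 0⟩) (rho_one_zero_weightVec k)
    (rho_one_zero_weightVec k') ?_
  rw [← AddChar.map_add_eq_mul, ← neg_add, Ne, hψ.zmod_char_eq_one_iff d, neg_eq_zero]
  exact hkk'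

theorem apply_weightVec_comm_of_isInvariantForm [NeZero d] (hψ : ψ.IsPrimitive)
    {B : LinearMap.BilinForm ℂ V} (hB : IsInvariantForm σ B) (j j' : ZMod a) :
    B (weightVec u ψ i (weight u i j)) (weightVec u ψ i (weight u i j')) =
      B (weightVec u ψ i (weight u i j')) (weightVec u ψ i (weight u i j)) := by
  by_cases h : weight u i j + weight u i j' = 0
  · have h1 : upow u (-(j' - j)) * weight u i j = weight u i j' := by
      rw [← weight_add, add_sub_cancel]
    have h2 : upow u (-(j' - j)) * weight u i j' = weight u i j := by
      rw [eq_neg_of_add_eq_zero_right h, mul_neg, h1, ← eq_neg_of_add_eq_zero_left h]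
    have := hB ⟨0, j' - j⟩ (weightVec u ψ i (weight u i j)) (weightVec u ψ i (weight u i j'))
    rwa [rho_mk_zero_weightVec, rho_mk_zero_weightVec, h1, h2, eq_comm] at this
  · rw [apply_weightVec_eq_zero_of_isInvariantForm hψ hB h,
      apply_weightVec_eq_zero_of_isInvariantForm hψ hB (by rwa [add_comm])]

theorem isSymm_of_isInvariantForm [NeZero d] (hψ : ψ.IsPrimitive)
    {B : LinearMap.BilinForm ℂ V} (hB : IsInvariantForm σ B) : B.IsSymm :=
  B.isSymm_of_span_eq_top span_range_weightVec (apply_weightVec_comm_of_isInvariantForm hψ hB)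

theorem weightVec_ne_zero : weightVec (a := a) u ψ i i ≠ 0 := fun h => by
  simpa [coord_weightVec, weight_zero] using congrArg (coord u ψ i 0) h

theorem exists_weight_eq_neg_of_nondegenerate [NeZero d] (hψ : ψ.IsPrimitive)
    {B : LinearMap.BilinForm ℂ V} (hB : IsInvariantForm σ B) (hnd : B.Nondegenerate) :
    ∃ m : ZMod a, weight u i m = -i := by
  by_contra! hm
  refine weightVec_ne_zero (hnd.1 _ fun v => ?_)
  have : B (weightVec u ψ i i) = 0 :=
    LinearMap.ext_on_range span_range_weightVec fun j =>
      apply_weightVec_eq_zero_of_isInvariantForm hψ hB fun h =>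
        hm j (eq_neg_of_add_eq_zero_right h)
  rw [this, LinearMap.zero_apply]

variable (u ψ i) in
noncomputable def pairing (m : ZMod a) : LinearMap.BilinForm ℂ V :=
  ∑ j, (LinearMap.mul ℂ ℂ).compl₁₂ (coord u ψ i j) (coord u ψ i (j + m))

theorem pairing_apply (m : ZMod a) (φ φ' : V) :
    pairing u ψ i m φ φ' = ∑ j, coord u ψ i j φ * coord u ψ i (j + m) φ' := by
  simp [pairing]

theorem weight_add_eq_neg {m : ZMod a} (hm : weight u i m = -i) (j : ZMod a) :
    weight u i (j + m) = -weight u i j := by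
  rw [add_comm, weight_add, hm, weight, mul_neg]

theorem isInvariantForm_pairing {m : ZMod a} (hm : weight u i m = -i) :
    IsInvariantForm σ (pairing u ψ i m) := by
  intro g φ φ'
  simp only [pairing_apply, coord_rho, weight_add_eq_neg hm]
  rw [← (Equiv.subRight g.j).sum_comp fun j => coord u ψ i j φ * coord u ψ i (j + m) φ']
  refine sum_congr rfl fun j _ => ?_
  rw [Equiv.subRight_apply, mul_mul_mul_comm, ← AddChar.map_add_eq_mul, neg_mul, neg_neg,
    neg_add_cancel, AddChar.map_zero_eq_one, one_mul, sub_add_eq_add_sub]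

theorem pairing_nondegenerate [NeZero d] (hψ : ψ.IsPrimitive) {m : ZMod a}
    (hm : weight u i m = -i) : (pairing u ψ i m).Nondegenerate := by
  refine (LinearMap.IsRefl.nondegenerate_iff_separatingLeft
    (isSymm_of_isInvariantForm hψ (isInvariantForm_pairing hm)).isRefl).mpr fun φ hφ => ?_
  refine ext_of_coord fun j => ?_
  have h := hφ (weightVec u ψ i (weight u i (j + m)))
  simp only [pairing_apply, coord_weightVec, weight_add_eq_neg hm, neg_inj, mul_ite, mul_one,
    mul_zero] at h
  rw [← sum_filter, sum_coord_of_weight_eq] at h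
  rw [map_zero]
  exact (mul_eq_zero.mp h).resolve_left (card_weight_eq_ne_zero i)

end Character

theorem mem_orb_iff_exists_weight_eq {i k : ZMod d} :
    k ∈ orb (a := a) u i ↔ ∃ j : ZMod a, weight u i j = k := by
  simp only [orb, mem_image, mem_univ, true_and, weight]
  exact (Equiv.neg (ZMod a)).exists_congr fun j => by rw [Equiv.neg_apply, neg_neg]

theorem image_neg_orb_eq_iff {i : ZMod d} :
    (orb (a := a) u i).image (fun x => -x) = orb (a := a) u i ↔ -i ∈ orb (a := a) u i := by
  refine ⟨fun h => h ▸ mem_image_of_mem _ (mem_orb_iff_exists_weight_eq.mpr ⟨0, weight_zero i⟩),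
    fun h => eq_of_subset_of_card_le (fun y hy => ?_)
      (card_image_of_injective _ neg_injective).ge⟩
  obtain ⟨k, hk, rfl⟩ := mem_image.mp hy
  obtain ⟨t, rfl⟩ := mem_orb_iff_exists_weight_eq.mp hk
  obtain ⟨s, hs⟩ := mem_orb_iff_exists_weight_eq.mp h
  exact mem_orb_iff_exists_weight_eq.mpr ⟨t + s, weight_add_eq_neg hs t⟩

end Gsd

open Gsd in
/-- **Lemma 3.6 of "Geometric non-vanishing" (Ulmer), finite-group content.**
Let `d` be a positive integer, `u` a unit of `ℤ/dℤ` of multiplicative order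
`a`, `G = (ℤ/dℤ) ⋊ (ℤ/aℤ)` the corresponding semidirect product, `ζ ∈ ℂ` a
primitive `d`-th root of unity, and `i ∈ ℤ/dℤ`.  Then the induced
representation `σ_{o(i)} = Ind_{H_i}^G χ̃_i` admits a nondegenerate
`G`-invariant bilinear form if and only if `-o(i) = o(i)`, and when
`-o(i) = o(i)` every `G`-invariant bilinear form on `σ_{o(i)}` is
symmetric. -/
theorem induced_rep_selfdual_iff_neg_orbit_eq
    {d a : ℕ} [NeZero d] [NeZero a] (u : (ZMod d)ˣ) [Fact (orderOf u = a)]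
    (ζ : ℂ) (hζ : IsPrimitiveRoot ζ d) (i : ZMod d) :
    ((∃ B : LinearMap.BilinForm ℂ (ind (Hsub (a := a) u i) (chi ζ i)),
        B.Nondegenerate ∧
        ∀ (g : Gsd d a u) (v w : ind (Hsub (a := a) u i) (chi ζ i)),
          B (rho (Hsub (a := a) u i) (chi ζ i) g v)
            (rho (Hsub (a := a) u i) (chi ζ i) g w) = B v w) ↔
      (orb (a := a) u i).image (fun x => -x) = orb (a := a) u i) ∧
    ((orb (a := a) u i).image (fun x => -x) = orb (a := a) u i →
      ∀ B : LinearMap.BilinForm ℂ (ind (Hsub (a := a) u i) (chi ζ i)),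
        (∀ (g : Gsd d a u) (v w : ind (Hsub (a := a) u i) (chi ζ i)),
          B (rho (Hsub (a := a) u i) (chi ζ i) g v)
            (rho (Hsub (a := a) u i) (chi ζ i) g w) = B v w) →
        ∀ v w, B v w = B w v) := by
  set ψ := AddChar.zmodChar d hζ.pow_eq_one
  have hψ : ψ.IsPrimitive := AddChar.zmodChar_primitive_of_primitive_root d hζ
  have hchi : chi ζ i = fun g : Gsd d a u => ψ (i * g.x) := rfl
  rw [hchi, image_neg_orb_eq_iff, mem_orb_iff_exists_weight_eq]
  refine ⟨⟨fun ⟨B, hnd, hB⟩ => exists_weight_eq_neg_of_nondegenerate hψ hB hnd,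
    fun ⟨m, hm⟩ => ⟨pairing u ψ i m, pairing_nondegenerate hψ hm, isInvariantForm_pairing hm⟩⟩,
    fun _ B hB => (isSymm_of_isInvariantForm hψ hB).eq⟩

end GeometricNonvanishing
end

section
/- Let F be an infinite field, let N ≥ 2 and a ≥ 1 be integers, let α ∈ F, and let δ₀, …, δ_{a−1} be nonzero elements of F. Then there exist invertible N×N matrices A₀, …, A_{a−1} over F with det A_j = δ_j for every j such that α is not an eigenvalue of the associated block-cyclic matrix M, i.e., det(α·I_{aN} − M) ≠ 0. -/
private lemma aux_prod_if {F : Type*} [Field F] {N : ℕ} [NeZero N] (u c : F) :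
    ∏ x : Fin N, (if x = 0 then u else c) = u * c ^ (N - 1) := by
  rw [← Finset.mul_prod_erase Finset.univ _ (Finset.mem_univ (0 : Fin N)), if_pos rfl]
  congr 1
  rw [Finset.prod_congr rfl (fun x hx => if_neg (Finset.ne_of_mem_erase hx)),
    Finset.prod_const, Finset.card_erase_of_mem (Finset.mem_univ 0), Finset.card_univ,
    Fintype.card_fin]

private lemma aux_cycle {F : Type*} [Field F] {a : ℕ} [NeZero a]
    (α : F) (d : ZMod a → F) (w : ZMod a → F)
    (h : ∀ j, α * w j = d (j-1) * w (j-1)) (j : ZMod a) :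
    α ^ a * w j = (∏ k, d k) * w j := by
  have step : ∀ n : ℕ, α ^ n * w j = (∏ i ∈ Finset.range n, d (j - (i+1))) * w (j - n) := by
    intro n
    induction n with
    | zero => simp
    | succ n ih =>
      have : (↑(n+1) : ZMod a) = ↑n + 1 := by push_cast; ring
      rw [pow_succ, mul_comm (α ^ n) α, mul_assoc, ih, Finset.prod_range_succ, this]
      rw [← mul_assoc, mul_comm α, mul_assoc, h (j - n)]
      rw [show j - (↑n + 1) = j - ↑n - 1 from by ring]
      ring
  have hstep := step a
  rw [ZMod.natCast_self, sub_zero] at hstep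
  rw [hstep]
  congr 1
  rw [← Fin.prod_univ_eq_prod_range (fun i => d (j - (↑i + 1)))]
  exact Fintype.prod_bijective (fun i : Fin a => j - ((i : ZMod a) + 1))
    (by
      rw [Fintype.bijective_iff_injective_and_card]
      refine ⟨fun i₁ i₂ hi => ?_, by simp [ZMod.card]⟩
      have hcast : (i₁ : ZMod a) = i₂ := by
        have := sub_right_injective (G := ZMod a) hi
        exact add_right_cancel this
      have h1 := ZMod.val_cast_of_lt i₁.isLt
      have h2 := ZMod.val_cast_of_lt i₂.isLt
      exact Fin.ext (by rw [← h1, ← h2, hcast])) _ _ (fun i => rfl)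

private lemma aux_mulvec {F : Type*} [Field F] {a N : ℕ} [NeZero a] (α : F)
    (D : ZMod a → Fin N → F) (v : ZMod a × Fin N → F)
    (hv : Matrix.mulVec (α • (1 : Matrix (ZMod a × Fin N) (ZMod a × Fin N) F)
        - blockCyclic (fun j => Matrix.diagonal (D j))) v = 0)
    (j : ZMod a) (x : Fin N) :
    α * v (j, x) = D (j-1) x * v (j-1, x) := by
  have h := congrFun hv (j, x)
  have hcond : ∀ k : ZMod a, (j = k + 1) = (k = j - 1) := by
    intro k
    simp [eq_sub_iff_add_eq, eq_comm]
  simp only [Matrix.mulVec, dotProduct, Matrix.sub_apply, Matrix.smul_apply,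
    Matrix.one_apply, blockCyclic, Matrix.of_apply, Matrix.diagonal_apply, sub_mul,
    Finset.sum_sub_distrib, Fintype.sum_prod_type, Pi.zero_apply, hcond] at h
  simp only [Prod.mk.injEq, ite_and, smul_eq_mul, mul_ite, mul_one, mul_zero, ite_mul,
    zero_mul, Finset.sum_ite_eq, Finset.sum_ite_eq', Finset.mem_univ, if_true] at h
  rw [Finset.sum_comm (f := fun x_1 x_2 => if j = x_1 then if x = x_2 then α * v (x_1, x_2) else 0 else 0),
    Finset.sum_comm (f := fun x_1 x_2 => if x_1 = j - 1 then if x = x_2 then D x_1 x * v (x_1, x_2) else 0 else 0)] at h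
  simp only [Finset.sum_ite_eq, Finset.sum_ite_eq', Finset.mem_univ, if_true] at h
  exact sub_eq_zero.mp h

/-- **Linear-algebra content of Section 8.5.3 of "Geometric non-vanishing"
(Ulmer).**  Let `F` be an infinite field, `N ≥ 2` and `a ≥ 1` integers,
`α ∈ F`, and `δ₀, …, δ_{a-1}` nonzero elements of `F`.  Then there exist
invertible `N × N` matrices `A₀, …, A_{a-1}` over `F` with `det (A j) = δ j`
for every `j`, such that `α` is not an eigenvalue of the associated
block-cyclic matrix `M`, i.e. `det (α • 1 - M) ≠ 0`. -/
theorem exists_blockCyclic_avoiding_eigenvalue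
    {F : Type*} [Field F] [Infinite F] {a N : ℕ} [NeZero a] (hN : 2 ≤ N)
    (α : F) (δ : ZMod a → F) (hδ : ∀ j, δ j ≠ 0) :
    ∃ A : ZMod a → Matrix (Fin N) (Fin N) F,
      (∀ j, IsUnit (A j).det) ∧ (∀ j, (A j).det = δ j) ∧
      (α • (1 : Matrix (ZMod a × Fin N) (ZMod a × Fin N) F) - blockCyclic A).det ≠ 0 := by
  classical
  have hNN : NeZero N := ⟨by omega⟩
  set P : F := ∏ k, δ k with hPdef
  have hP : P ≠ 0 := Finset.prod_ne_zero_iff.mpr fun k _ => hδ k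
  -- pick c avoiding finitely many bad values
  set q : Polynomial F := Polynomial.X ^ (N - 1) - Polynomial.C (P / α ^ a) with hqdef
  have hq : q ≠ 0 := Polynomial.X_pow_sub_C_ne_zero (by omega) _
  obtain ⟨c, hc⟩ := Infinite.exists_notMem_finset
    (insert (0 : F) (insert (α ^ a) q.roots.toFinset))
  simp only [Finset.mem_insert, not_or, Multiset.mem_toFinset] at hc
  obtain ⟨hc0, hc1, hc2'⟩ := hc
  have hc2 : α ^ a * c ^ (N - 1) ≠ P := by
    intro heq
    rcases eq_or_ne (α ^ a) 0 with h0 | h0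
    · rw [h0, zero_mul] at heq; exact hP heq.symm
    · apply hc2'
      rw [Polynomial.mem_roots hq]
      simp only [hqdef, Polynomial.IsRoot, Polynomial.eval_sub, Polynomial.eval_pow,
        Polynomial.eval_X, Polynomial.eval_C]
      rw [sub_eq_zero, eq_div_iff h0]
      linear_combination heq
  have hcpow : c ^ (N - 1) ≠ 0 := pow_ne_zero _ hc0
  -- the diagonal entries
  set D : ZMod a → Fin N → F := fun j x =>
    if j = 0 then (if x = 0 then δ 0 * (c ^ (N - 1))⁻¹ else c)
    else (if x = 0 then δ j else 1) with hDdef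
  have hdet : ∀ j, (Matrix.diagonal (D j)).det = δ j := by
    intro j
    rw [Matrix.det_diagonal]
    by_cases hj : j = 0
    · subst hj
      simp only [hDdef, if_pos rfl]
      rw [aux_prod_if, mul_assoc, inv_mul_cancel₀ hcpow, mul_one]
    · simp only [hDdef, if_neg hj]
      rw [aux_prod_if, one_pow, mul_one]
  refine ⟨fun j => Matrix.diagonal (D j),
    fun j => by rw [hdet j]; exact (hδ j).isUnit, hdet, ?_⟩
  -- cycle products avoid α^a
  have hcyc : ∀ x : Fin N, (∏ k, D k x) ≠ α ^ a := by
    intro x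
    by_cases hx : x = 0
    · subst hx
      have hform : ∀ k : ZMod a, D k 0 = if k = 0 then δ 0 * (c ^ (N - 1))⁻¹ else δ k := by
        intro k
        by_cases hk : k = 0 <;> simp [hDdef, hk]
      rw [Finset.prod_congr rfl fun k _ => hform k]
      rw [← Finset.mul_prod_erase Finset.univ _ (Finset.mem_univ (0 : ZMod a)), if_pos rfl]
      rw [Finset.prod_congr rfl (fun k hk => if_neg (Finset.ne_of_mem_erase hk))]
      intro heq
      apply hc2
      have hPsplit : P = δ 0 * ∏ k ∈ Finset.univ.erase (0 : ZMod a), δ k := by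
        rw [hPdef, ← Finset.mul_prod_erase Finset.univ _ (Finset.mem_univ (0 : ZMod a))]
      rw [hPsplit, ← heq]
      field_simp
      try ring
    · have hform : ∀ k : ZMod a, D k x = if k = 0 then c else 1 := by
        intro k
        by_cases hk : k = 0 <;> simp [hDdef, hk, hx]
      rw [Finset.prod_congr rfl fun k _ => hform k]
      rw [← Finset.mul_prod_erase Finset.univ _ (Finset.mem_univ (0 : ZMod a)), if_pos rfl]
      rw [Finset.prod_congr rfl (fun k hk => if_neg (Finset.ne_of_mem_erase hk)),
        Finset.prod_const_one, mul_one]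
      exact fun h => hc1 h
  -- no eigenvalue α
  intro hdet0
  obtain ⟨v, hv0, hv⟩ := Matrix.exists_mulVec_eq_zero_iff.mpr hdet0
  apply hv0
  funext p
  obtain ⟨j, x⟩ := p
  have key := fun j => aux_mulvec α D v hv j x
  have := aux_cycle α (fun k => D k x) (fun k => v (k, x)) key j
  have hne : α ^ a - (∏ k, D k x) ≠ 0 := sub_ne_zero.mpr (Ne.symm (hcyc x))
  have : (α ^ a - (∏ k, D k x)) * v (j, x) = 0 := by linear_combination this
  have := (mul_eq_zero.mp this).resolve_left hne
  simpa using this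
end
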